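/- arXiv:2006.16602 — 6 statements merged into one kernel-verified Lean document; each statement's English description precedes it below -/
import Mathlib

section
/- Let M be a metric space and f : M → M a homeomorphism. Let (K₁, j₁, h₁) and (K₂, j₂, h₂) be two weak Denjoy sub-systems for f with j₁(K₁) = j₂(K₂). Then the order graphs satisfy G(K₁, j₁) = G(K₂, j₂) or G(K₁, j₁) = G(K₂, j₂)⁻ (the reverse of G(K₂, j₂)). -/
open Filter Topology Set

noncomputable section

/-- A Denjoy example: an orientation-preserving circle homeomorphism with
irrational rotation number together with its minimal invariant Cantor set. -/
structure DenjoySystem where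
  /-- the circle homeomorphism -/
  h : UnitAddCircle ≃ₜ UnitAddCircle
  /-- the minimal set -/
  K : Set UnitAddCircle
  /-- a lift of `h` to `ℝ` -/
  lift : ℝ → ℝ
  lift_mono : StrictMono lift
  lift_cont : Continuous lift
  lift_bij : Function.Bijective lift
  lift_add : ∀ x : ℝ, lift (x + 1) = lift x + 1
  lift_proj : ∀ x : ℝ, ((lift x : ℝ) : UnitAddCircle) = h (x : UnitAddCircle)
  /-- a representative of the rotation number -/
  rot : ℝ
  rot_lim : Filter.Tendsto (fun n : ℕ => lift^[n] 0 / (n : ℝ)) Filter.atTop (nhds rot)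
  rot_irr : Irrational rot
  K_ne : K.Nonempty
  K_cpt : IsCompact K
  K_proper : K ≠ Set.univ
  K_inv : h '' K = K
  K_perf : Perfect K
  K_td : IsTotallyDisconnected K
  K_min : ∀ x ∈ K, ∀ y ∈ K, y ∈ closure {z | ∃ n : ℤ, (h.toEquiv ^ n) x = z}

/-- A weak Denjoy sub-system (WDS) for a map `f : M → M`. -/
structure WDS (M : Type*) [TopologicalSpace M] (f : M → M) extends DenjoySystem where
  /-- the embedding of the minimal set into `M` -/
  j : K → M
  j_emb : Topology.IsEmbedding j
  range_inv : f '' Set.range j = Set.range j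
  equivar : ∀ x y : K, h (x : UnitAddCircle) = (y : UnitAddCircle) → j y = f (j x)

/-- Weak cyclic order on the circle. -/
def CircBtw (a b c : UnitAddCircle) : Prop :=
  ∃ x y z : ℝ, (x : UnitAddCircle) = a ∧ (y : UnitAddCircle) = b ∧ (z : UnitAddCircle) = c ∧
    x ≤ y ∧ y ≤ z ∧ z ≤ x + 1

/-- The order graph of a WDS. -/
def WDS.orderGraph {M : Type*} [TopologicalSpace M] {f : M → M} (W : WDS M f) :
    Set (M × M × M) :=
  {p | ∃ a b c : W.K, CircBtw (a : UnitAddCircle) (b : UnitAddCircle) (c : UnitAddCircle) ∧ p = (W.j a, W.j b, W.j c)}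

/-- The reverse of the order graph of a WDS. -/
def WDS.revGraph {M : Type*} [TopologicalSpace M] {f : M → M} (W : WDS M f) :
    Set (M × M × M) :=
  {p | (p.2.2, p.2.1, p.1) ∈ W.orderGraph}

/-!
By Poincaré's theory each Denjoy example `D` has a monotone degree-one semiconjugacy `D.collapse`
onto the rotation by its rotation number; it collapses the gaps of the minimal set `K` and is at
most two-to-one on `K`. Two sub-systems with the same image are conjugate on their minimal sets by
`conj = j₂⁻¹ ∘ j₁`. Points of `K₁` with the same image under `collapse₁` have asymptotic forward
orbits, while `collapse₂ ∘ conj` is continuous and moves by a constant along orbits, so `conj`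
descends to a continuous injective circle map `inducedMap`. Such a map preserves or reverses the
cyclic order; hence so does `conj` on triples with distinct images under `collapse₁`, and then on all
triples, since the cyclic order is closed and `collapse₁` is finite-to-one on the perfect set `K₁`.
-/

open scoped Pointwise

local notation "𝕋" => UnitAddCircle

/-! ### Cyclic order on the circle -/

theorem AddCircle.coe_toIcoMod {p : ℝ} (hp : 0 < p) (x y : ℝ) :
    ((toIcoMod hp x y : ℝ) : AddCircle p) = y := by
  rw [toIcoMod, AddCircle.coe_sub, AddCircle.coe_zsmul, AddCircle.coe_period, smul_zero, sub_zero]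

theorem AddCircle.coe_toIocMod {p : ℝ} (hp : 0 < p) (x y : ℝ) :
    ((toIocMod hp x y : ℝ) : AddCircle p) = y := by
  rw [toIocMod, AddCircle.coe_sub, AddCircle.coe_zsmul, AddCircle.coe_period, smul_zero, sub_zero]

theorem circBtw_iff_btw {a b c : 𝕋} : CircBtw a b c ↔ btw a b c := by
  constructor
  · rintro ⟨x, y, z, rfl, rfl, rfl, hxy, hyz, hzx⟩
    rw [QuotientAddGroup.btw_coe_iff]
    have hy : toIcoMod one_pos x y ≤ y := by
      rcases hyz.trans hzx |>.lt_or_eq with hy | rfl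
      · exact ((toIcoMod_eq_self _).2 ⟨hxy, hy⟩).le
      · rw [toIcoMod_apply_right]; exact hxy
    have hz : z ≤ toIocMod one_pos x z := by
      rcases hxy.trans hyz |>.eq_or_lt with rfl | hz
      · rw [toIocMod_apply_left]; linarith
      · exact ((toIocMod_eq_self _).2 ⟨hz, hzx⟩).ge
    exact hy.trans (hyz.trans hz)
  · induction a using QuotientAddGroup.induction_on with | H x => ?_
    induction b using QuotientAddGroup.induction_on with | H y => ?_
    induction c using QuotientAddGroup.induction_on with | H z => ?_
    intro h
    rw [QuotientAddGroup.btw_coe_iff] at h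
    exact ⟨x, _, _, rfl, AddCircle.coe_toIcoMod _ x y, AddCircle.coe_toIocMod _ x z,
      left_le_toIcoMod _ _ _, h, toIocMod_le_right _ _ _⟩

theorem sbtw_iff_exists_lifts {a b c : 𝕋} : sbtw a b c ↔
    ∃ x y z : ℝ, (x < y ∧ y < z ∧ z < x + 1) ∧ (x : 𝕋) = a ∧ (y : 𝕋) = b ∧ (z : 𝕋) = c := by
  constructor
  · intro h
    obtain ⟨x, y, z, rfl, rfl, rfl, hxy, hyz, hzx⟩ := circBtw_iff_btw.2 h.btw
    refine ⟨x, y, z, ⟨hxy.lt_of_ne ?_, hyz.lt_of_ne ?_, hzx.lt_of_ne ?_⟩, rfl, rfl, rfl⟩ <;>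
      rintro rfl
    · exact sbtw_irrefl_left h
    · exact sbtw_irrefl_right h
    · rw [AddCircle.coe_add_period] at h
      exact sbtw_irrefl_left_right h
  · rintro ⟨x, y, z, ⟨hxy, hyz, hzx⟩, rfl, rfl, rfl⟩
    have hIco : ∀ t, x ≤ t → t < x + 1 → t ∈ Ico x (x + 1) := fun t h1 h2 => ⟨h1, h2⟩
    have ne : ∀ s t, x ≤ s → s < t → t < x + 1 → (s : 𝕋) ≠ t := fun s t h1 h2 h3 h =>
      h2.ne ((AddCircle.coe_eq_coe_iff_of_mem_Ico (hIco s h1 (h2.trans h3))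
        (hIco t (h1.trans h2.le) h3)).1 h)
    refine sbtw_iff_not_btw.2 fun hcba => ?_
    rcases (circBtw_iff_btw.1 ⟨x, y, z, rfl, rfl, rfl, hxy.le, hyz.le, hzx.le⟩).antisymm hcba with
      h | h | h
    · exact ne x y le_rfl hxy (by linarith) h
    · exact ne y z hxy.le hyz hzx h
    · exact ne x z le_rfl (hxy.trans hyz) hzx h.symm

theorem btw_neg_iff {a b c : 𝕋} : btw (-a) (-b) (-c) ↔ btw c b a := by
  have key : ∀ {a b c : 𝕋}, btw a b c → btw (-c) (-b) (-a) := fun h => by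
    obtain ⟨x, y, z, rfl, rfl, rfl, hxy, hyz, hzx⟩ := circBtw_iff_btw.2 h
    exact circBtw_iff_btw.1 ⟨-z, -y, -x, rfl, rfl, rfl, by linarith, by linarith, by linarith⟩
  exact ⟨fun h => by simpa using key h, key⟩

theorem setOf_sbtw_eq_image :
    {p : 𝕋 × 𝕋 × 𝕋 | sbtw p.1 p.2.1 p.2.2} =
      Prod.map ((↑) : ℝ → 𝕋) (Prod.map ((↑) : ℝ → 𝕋) ((↑) : ℝ → 𝕋)) ''
        {q : ℝ × ℝ × ℝ | q.1 < q.2.1 ∧ q.2.1 < q.2.2 ∧ q.2.2 < q.1 + 1} := by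
  ext ⟨a, b, c⟩
  simp only [mem_ofPred_eq, sbtw_iff_exists_lifts, mem_image, Prod.exists, Prod.map_apply,
    Prod.mk.injEq]

theorem isOpen_setOf_sbtw : IsOpen {p : 𝕋 × 𝕋 × 𝕋 | sbtw p.1 p.2.1 p.2.2} := by
  have hcoe := QuotientAddGroup.isOpenMap_coe (N := AddSubgroup.zmultiples (1 : ℝ))
  rw [setOf_sbtw_eq_image]
  refine (hcoe.prodMap (hcoe.prodMap hcoe)) _ ?_
  exact (isOpen_lt continuous_fst (continuous_fst.comp continuous_snd)).inter
    ((isOpen_lt (continuous_fst.comp continuous_snd) (continuous_snd.comp continuous_snd)).inter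
      (isOpen_lt (continuous_snd.comp continuous_snd) (continuous_fst.add continuous_const)))

theorem isClosed_setOf_btw : IsClosed {p : 𝕋 × 𝕋 × 𝕋 | btw p.1 p.2.1 p.2.2} := by
  simp_rw [← isOpen_compl_iff, compl_ofPred, ← sbtw_iff_not_btw]
  exact isOpen_setOf_sbtw.preimage
    (by fun_prop : Continuous fun p : 𝕋 × 𝕋 × 𝕋 => (p.2.2, p.2.1, p.1))

theorem isPreconnected_setOf_sbtw :
    IsPreconnected {p : 𝕋 × 𝕋 × 𝕋 | sbtw p.1 p.2.1 p.2.2} := by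
  have hconvex : Convex ℝ {q : ℝ × ℝ × ℝ | q.1 < q.2.1 ∧ q.2.1 < q.2.2 ∧ q.2.2 < q.1 + 1} := by
    rintro p ⟨hp₁, hp₂, hp₃⟩ q ⟨hq₁, hq₂, hq₃⟩ s t hs ht hst
    rcases hs.eq_or_lt with rfl | hs
    · obtain rfl : t = 1 := by linarith
      simpa using And.intro hq₁ (And.intro hq₂ hq₃)
    simp only [mem_ofPred_eq, Prod.fst_add, Prod.snd_add, Prod.smul_fst, Prod.smul_snd,
      smul_eq_mul]
    refine ⟨?_, ?_, ?_⟩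
    · nlinarith [mul_pos hs (sub_pos.2 hp₁), mul_nonneg ht (sub_pos.2 hq₁).le]
    · nlinarith [mul_pos hs (sub_pos.2 hp₂), mul_nonneg ht (sub_pos.2 hq₂).le]
    · nlinarith [mul_pos hs (sub_pos.2 hp₃), mul_nonneg ht (sub_pos.2 hq₃).le]
  rw [setOf_sbtw_eq_image]
  exact hconvex.isPreconnected.image _ (by fun_prop)

theorem sbtw_of_btw_of_ne {α : Type*} [CircularOrder α] {a b c : α} (h : btw a b c) (hab : a ≠ b)
    (hbc : b ≠ c) (hca : c ≠ a) : sbtw a b c :=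
  sbtw_iff_btw_not_btw.2 ⟨h, fun hcba => by rcases h.antisymm hcba with e | e | e <;> contradiction⟩

theorem Continuous.sbtw_map_or_sbtw_map_rev {g : 𝕋 → 𝕋} (hg : Continuous g)
    (hinj : Function.Injective g) :
    (∀ a b c, sbtw a b c → sbtw (g a) (g b) (g c)) ∨
      (∀ a b c, sbtw a b c → sbtw (g c) (g b) (g a)) := by
  set S := {p : 𝕋 × 𝕋 × 𝕋 | sbtw p.1 p.2.1 p.2.2}
  set rev : 𝕋 × 𝕋 × 𝕋 → 𝕋 × 𝕋 × 𝕋 := fun p => (p.2.2, p.2.1, p.1)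
  set g₃ : 𝕋 × 𝕋 × 𝕋 → 𝕋 × 𝕋 × 𝕋 := fun p => (g p.1, g p.2.1, g p.2.2)
  have hsub : g₃ '' S ⊆ S ∪ rev ⁻¹' S := by
    rintro _ ⟨⟨a, b, c⟩, h : sbtw a b c, rfl⟩
    have hab : g a ≠ g b := hinj.ne fun e => sbtw_irrefl_left (by rwa [e] at h)
    have hbc : g b ≠ g c := hinj.ne fun e => sbtw_irrefl_right (by rwa [e] at h)
    have hca : g c ≠ g a := hinj.ne fun e => sbtw_irrefl_left_right (by rwa [e] at h)
    by_cases hcba : btw (g c) (g b) (g a)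
    · exact Or.inr (sbtw_of_btw_of_ne hcba hbc.symm hab.symm hca.symm)
    · exact Or.inl (sbtw_iff_not_btw.2 hcba)
  have hdisj : Disjoint S (rev ⁻¹' S) :=
    disjoint_left.2 fun p h h' =>
      sbtw_asymm (show sbtw p.1 p.2.1 p.2.2 from h) (show sbtw p.2.2 p.2.1 p.1 from h')
  rcases isPreconnected_setOf_sbtw.image g₃ (by fun_prop) |>.subset_or_subset isOpen_setOf_sbtw
    (isOpen_setOf_sbtw.preimage (by fun_prop)) hdisj hsub with h | h
  · exact Or.inl fun a b c habc => h ⟨(a, b, c), habc, rfl⟩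
  · exact Or.inr fun a b c habc => h ⟨(a, b, c), habc, rfl⟩

theorem btw_iff_of_injective {α β γ : Type*} [CircularOrder β] [CircularOrder γ] {u : α → β}
    {v : α → γ} (hv : Function.Injective v)
    (h : ∀ a b c, btw (u a) (u b) (u c) → btw (v a) (v b) (v c)) (a b c : α) :
    btw (v a) (v b) (v c) ↔ btw (u a) (u b) (u c) := by
  refine ⟨fun hv' => ?_, h a b c⟩
  by_contra hu'
  have hcba := h c b a (sbtw_iff_not_btw.2 hu').btw
  rcases hv'.antisymm hcba with e | e | e <;> rw [hv e] at hu'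
  exacts [hu' btw_rfl_left, hu' btw_rfl_right, hu' btw_rfl_left_right]

theorem btw_apply_of_btw_of_not_sbtw {α β γ : Type*} [CircularOrder β] [CircularOrder γ]
    {u : α → β} (hu : Function.Injective u) (v : α → γ) {a b c : α} (h : btw (u a) (u b) (u c))
    (hs : ¬sbtw (u a) (u b) (u c)) : btw (v a) (v b) (v c) := by
  rw [sbtw_iff_btw_not_btw, not_and_not_right] at hs
  rcases h.antisymm (hs h) with e | e | e <;> rw [hu e]
  exacts [btw_rfl_left, btw_rfl_right, btw_rfl_left_right]

/-! ### Disjoint arcs and asymptotic orbits -/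

theorem UnitAddCircle.norm_coe_le_abs (x : ℝ) : ‖(x : 𝕋)‖ ≤ |x| := by
  rw [UnitAddCircle.norm_eq]
  simpa using round_le x 0

theorem AddCircle.volume_image_coe_Ioo {T : ℝ} [Fact (0 < T)] {s t : ℝ} (ht : t ≤ s + T) :
    MeasureTheory.volume (((↑) : ℝ → AddCircle T) '' Ioo s t) = ENNReal.ofReal (t - s) := by
  have hmeas : MeasurableSet (((↑) : ℝ → AddCircle T) '' Ioo s t) :=
    (QuotientAddGroup.isOpenMap_coe _ isOpen_Ioo).measurableSet
  rw [AddCircle.add_projection_respects_measure T s hmeas, ← Real.volume_Ioo]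
  congr 1
  ext w
  constructor
  · rintro ⟨⟨w', hw', hw'w⟩, hw⟩
    rwa [← (AddCircle.coe_eq_coe_iff_of_mem_Ioc ⟨hw'.1, hw'.2.le.trans ht⟩ hw).1 hw'w]
  · exact fun hw => ⟨⟨w, hw, rfl⟩, hw.1, hw.2.le.trans ht⟩

theorem tendsto_sub_of_pairwise_disjoint_image_coe_Ioo {T : ℝ} [Fact (0 < T)] {u v : ℕ → ℝ}
    (huv : ∀ n, u n ≤ v n) (hvu : ∀ n, v n ≤ u n + T)
    (hdisj : Pairwise fun m n => Disjoint (((↑) : ℝ → AddCircle T) '' Ioo (u m) (v m))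
      (((↑) : ℝ → AddCircle T) '' Ioo (u n) (v n))) :
    Tendsto (fun n => v n - u n) atTop (𝓝 0) := by
  have hsum : ∑' n, ENNReal.ofReal (v n - u n) ≠ ⊤ := by
    simp_rw [← AddCircle.volume_image_coe_Ioo (hvu _)]
    rw [← MeasureTheory.measure_iUnion hdisj fun n =>
      (QuotientAddGroup.isOpenMap_coe _ isOpen_Ioo).measurableSet]
    exact MeasureTheory.measure_ne_top _ _
  have h := (ENNReal.tendsto_toReal ENNReal.zero_ne_top).comp
    (ENNReal.tendsto_atTop_zero_of_tsum_ne_top hsum)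
  rw [ENNReal.toReal_zero] at h
  exact h.congr fun n => ENNReal.toReal_ofReal (sub_nonneg.2 (huv n))

theorem eq_of_tendsto_dist_iterate {X G : Type*} [MetricSpace X] [CompactSpace X]
    [NormedAddCommGroup G] {T : X → X} {ψ : X → G} {c : G} (hψ : Continuous ψ)
    (hT : ∀ x, ψ (T x) = ψ x + c) {a b : X}
    (h : Tendsto (fun n => dist (T^[n] a) (T^[n] b)) atTop (𝓝 0)) : ψ a = ψ b := by
  have hiter : ∀ n, ψ (T^[n] a) - ψ (T^[n] b) = ψ a - ψ b := by
    intro n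
    induction n with
    | zero => rfl
    | succ n ih => rw [Function.iterate_succ_apply', Function.iterate_succ_apply', hT, hT,
        add_sub_add_right_eq_sub, ih]
  have hψn := tendsto_uniformity_iff_dist_tendsto_zero.1 <|
    Tendsto.comp (CompactSpace.uniformContinuous_of_continuous hψ)
      ((tendsto_uniformity_iff_dist_tendsto_zero (f := fun n => (T^[n] a, T^[n] b))).2 h)
  simp only [Function.comp_apply, dist_eq_norm, hiter] at hψn
  exact sub_eq_zero.1 (norm_eq_zero.1 (tendsto_nhds_unique tendsto_const_nhds hψn))

/-! ### The semiconjugacy of a Denjoy example to its rotation -/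

namespace DenjoySystem

variable (D : DenjoySystem)

def toCircleDeg1Lift : CircleDeg1Lift := ⟨⟨D.lift, D.lift_mono.monotone⟩, D.lift_add⟩

theorem translationNumber_toCircleDeg1Lift : D.toCircleDeg1Lift.translationNumber = D.rot := by
  refine tendsto_nhds_unique ?_ D.rot_lim
  have h := D.toCircleDeg1Lift.tendsto_translation_number₀
  simp only [CircleDeg1Lift.coe_pow] at h
  exact h

theorem exists_semiconj_add_rot :
    ∃ π : CircleDeg1Lift, Function.Semiconj π D.lift (· + D.rot) := by
  obtain ⟨π, hπ⟩ := CircleDeg1Lift.semiconj_of_isUnit_of_translationNumber_eq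
    (CircleDeg1Lift.isUnit_iff_bijective.2 D.lift_bij)
    (CircleDeg1Lift.translate (Multiplicative.ofAdd D.rot)).isUnit
    (by rw [translationNumber_toCircleDeg1Lift, CircleDeg1Lift.translationNumber_translate])
  exact ⟨π, fun x => (hπ x).trans (add_comm _ _)⟩

def semiconjLift : CircleDeg1Lift := D.exists_semiconj_add_rot.choose

theorem semiconj_semiconjLift : Function.Semiconj D.semiconjLift D.lift (· + D.rot) :=
  D.exists_semiconj_add_rot.choose_spec

theorem semiconjLift_lift (x : ℝ) : D.semiconjLift (D.lift x) = D.semiconjLift x + D.rot :=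
  D.semiconj_semiconjLift x

theorem semiconjLift_iterate_lift (n : ℕ) (x : ℝ) :
    D.semiconjLift (D.lift^[n] x) = D.semiconjLift x + n * D.rot := by
  rw [D.semiconj_semiconjLift.iterate_right n x, add_right_iterate_apply, nsmul_eq_mul]

theorem denseRange_semiconjLift : DenseRange D.semiconjLift := by
  have hstab : AddSubgroup.closure {D.rot, 1} ≤ AddAction.stabilizer ℝ (range D.semiconjLift) := by
    rw [AddSubgroup.closure_le, pair_subset_iff]
    simp only [SetLike.mem_coe, AddAction.mem_stabilizer_iff, vadd_set_range, vadd_eq_add]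
    constructor
    · have : (D.rot + D.semiconjLift ·) = D.semiconjLift ∘ D.lift :=
        funext fun x => by simp [semiconjLift_lift, add_comm]
      rw [this, D.lift_bij.surjective.range_comp]
    · have : (1 + D.semiconjLift ·) = D.semiconjLift ∘ (· + 1) :=
        funext fun x => by simp [add_comm]
      rw [this, (add_right_surjective 1).range_comp]
  have hdense : Dense (AddSubgroup.closure {D.rot, 1} : Set ℝ) :=
    dense_addSubgroupClosure_pair_iff.2 (by simpa using D.rot_irr)
  refine ((add_left_surjective (D.semiconjLift 0)).denseRange.dense_image
    (continuous_const_add _) hdense).mono ?_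
  rintro _ ⟨s, hs, rfl⟩
  rw [← AddAction.mem_stabilizer_iff.1 (hstab hs)]
  exact ⟨D.semiconjLift 0, mem_range_self 0, add_comm _ _⟩

theorem semiconjLift_eq_of_mem_Icc {u v s : ℝ} (huv : D.semiconjLift u = D.semiconjLift v)
    (hs : s ∈ Icc u v) : D.semiconjLift s = D.semiconjLift u :=
  le_antisymm (huv ▸ D.semiconjLift.monotone hs.2) (D.semiconjLift.monotone hs.1)

theorem continuous_semiconjLift : Continuous D.semiconjLift :=
  D.semiconjLift.monotone.continuous_of_denseRange D.denseRange_semiconjLift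

/-- Collapses each gap of `K` to a point (see `coe_notMem_K_of_semiconjLift_eq`). -/
def collapse : 𝕋 → 𝕋 :=
  Function.Periodic.lift (f := fun x : ℝ => (D.semiconjLift x : 𝕋)) fun x => by
    simp only [CircleDeg1Lift.map_add_one, AddCircle.coe_add_period]

@[simp]
theorem collapse_coe (x : ℝ) : D.collapse x = D.semiconjLift x := rfl

@[fun_prop]
theorem continuous_collapse : Continuous D.collapse :=
  (QuotientAddGroup.isQuotientMap_mk _).continuous_iff.2 <|
    continuous_quotient_mk'.comp D.continuous_semiconjLift

theorem collapse_h (a : 𝕋) : D.collapse (D.h a) = D.collapse a + D.rot := by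
  induction a using QuotientAddGroup.induction_on with | H x => ?_
  rw [← D.lift_proj, collapse_coe, collapse_coe, semiconjLift_lift, AddCircle.coe_add]

theorem collapse_zpow (n : ℤ) (a : 𝕋) :
    D.collapse ((D.h.toEquiv ^ n) a) = D.collapse a + n • (D.rot : 𝕋) := by
  induction n using Int.induction_on with
  | zero => simp
  | succ n ih =>
    rw [← mul_self_zpow, Equiv.Perm.mul_apply, Homeomorph.coe_toEquiv, collapse_h, ih, add_zsmul,
      one_zsmul, add_assoc]
  | pred n ih =>
    rw [← sub_add_cancel (-(n : ℤ)) 1, ← mul_self_zpow, Equiv.Perm.mul_apply,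
      Homeomorph.coe_toEquiv, collapse_h, ← eq_sub_iff_add_eq] at ih
    rw [ih, sub_add_cancel, sub_zsmul, one_zsmul]
    abel

theorem btw_collapse {a b c : 𝕋} (h : btw a b c) :
    btw (D.collapse a) (D.collapse b) (D.collapse c) := by
  obtain ⟨x, y, z, rfl, rfl, rfl, hxy, hyz, hzx⟩ := circBtw_iff_btw.2 h
  refine circBtw_iff_btw.1 ⟨_, _, _, rfl, rfl, rfl, D.semiconjLift.monotone hxy,
    D.semiconjLift.monotone hyz, ?_⟩
  simpa only [CircleDeg1Lift.map_add_one] using D.semiconjLift.monotone hzx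

theorem btw_of_sbtw_collapse {a b c : 𝕋} (h : sbtw (D.collapse a) (D.collapse b) (D.collapse c)) :
    btw a b c :=
  btw_iff_not_sbtw.2 fun hcba => h.not_btw (D.btw_collapse hcba.btw)

theorem eq_zero_of_zsmul_rot_eq_zero {n : ℤ} (h : n • (D.rot : 𝕋) = 0) : n = 0 := by
  rw [← AddCircle.coe_zsmul, AddCircle.coe_eq_zero_iff] at h
  obtain ⟨m, hm⟩ := h
  by_contra hn
  exact (D.rot_irr.intCast_mul hn).ne_int m (by rw [← zsmul_eq_mul, ← hm, zsmul_one])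

theorem mapsTo_h : MapsTo D.h D.K D.K := fun _ hx => D.K_inv ▸ mem_image_of_mem _ hx

theorem zpow_apply_mem_K (n : ℤ) {a : 𝕋} (ha : a ∈ D.K) : (D.h.toEquiv ^ n) a ∈ D.K := by
  induction n using Int.induction_on with
  | zero => exact ha
  | succ n ih =>
    rw [← mul_self_zpow, Equiv.Perm.mul_apply]
    exact D.mapsTo_h ih
  | pred n ih =>
    rw [← D.K_inv] at ih
    obtain ⟨b, hb, hba⟩ := ih
    rw [← sub_add_cancel (-(n : ℤ)) 1, ← mul_self_zpow, Equiv.Perm.mul_apply,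
      Homeomorph.coe_toEquiv, D.h.injective.eq_iff] at hba
    exact hba ▸ hb

theorem collapse_image_K : D.collapse '' D.K = univ := by
  obtain ⟨k, hk⟩ := D.K_ne
  have hdense : DenseRange (fun n : ℤ => D.collapse k + n • (D.rot : 𝕋)) :=
    (add_left_surjective (D.collapse k)).denseRange.comp
      (AddCircle.denseRange_zsmul_coe_iff.2 (by simpa using D.rot_irr)) (continuous_const_add _)
  have hsub : range (fun n : ℤ => D.collapse k + n • (D.rot : 𝕋)) ⊆ D.collapse '' D.K := by
    rintro _ ⟨n, rfl⟩
    exact ⟨_, D.zpow_apply_mem_K n hk, D.collapse_zpow n k⟩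
  refine eq_univ_of_univ_subset ?_
  rw [← hdense.closure_eq]
  exact closure_minimal hsub (D.K_cpt.image D.continuous_collapse).isClosed

def collapseK : C(D.K, 𝕋) := ⟨fun x => D.collapse x, by fun_prop⟩

theorem collapseK_apply (x : D.K) : D.collapseK x = D.collapse x := rfl

theorem isQuotientMap_collapseK : IsQuotientMap D.collapseK := by
  have := isCompact_iff_compactSpace.1 D.K_cpt
  refine D.collapseK.continuous.isClosedMap.isQuotientMap D.collapseK.continuous fun t => ?_
  obtain ⟨k, hk, rfl⟩ := D.collapse_image_K.symm ▸ mem_univ t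
  exact ⟨⟨k, hk⟩, rfl⟩

theorem coe_notMem_K_of_semiconjLift_eq {u v t : ℝ} (huv : D.semiconjLift u = D.semiconjLift v)
    (ht : t ∈ Ioo u v) : (t : 𝕋) ∉ D.K := by
  intro htK
  set A := ((↑) : ℝ → 𝕋) '' Ioo u v
  have hA : IsOpen A := QuotientAddGroup.isOpenMap_coe _ isOpen_Ioo
  have hconst : ∀ s ∈ Ioo u v, D.collapse s = D.collapse u := fun s hs => by
    rw [collapse_coe, collapse_coe, D.semiconjLift_eq_of_mem_Icc huv (Ioo_subset_Icc_self hs)]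
  -- since `K` is perfect, the orbit of `t` returns to `A` at some point other than `t`
  obtain ⟨k, ⟨hkA, hkK⟩, hkt⟩ :=
    accPt_iff_nhds.1 (D.K_perf.acc _ htK) A (hA.mem_nhds ⟨t, ht, rfl⟩)
  obtain ⟨_, ⟨⟨s, hs, rfl⟩, hst⟩, n, hn⟩ := mem_closure_iff.1 (D.K_min _ htK k hkK)
    (A \ {(t : 𝕋)}) (hA.sdiff isClosed_singleton) ⟨hkA, hkt⟩
  have hrot : n • (D.rot : 𝕋) = 0 := by
    have := D.collapse_zpow n t
    rwa [hn, hconst s hs, ← hconst t ht, left_eq_add] at this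
  rw [D.eq_zero_of_zsmul_rot_eq_zero hrot, zpow_zero] at hn
  exact hst hn.symm

theorem exists_coe_eq_semiconjLift_eq {b : 𝕋} {x : ℝ} (h : D.collapse b = D.collapse x) :
    ∃ y : ℝ, (y : 𝕋) = b ∧ D.semiconjLift y = D.semiconjLift x := by
  induction b using QuotientAddGroup.induction_on with | H y => ?_
  obtain ⟨m, hm⟩ := AddSubgroup.mem_zmultiples_iff.1 (QuotientAddGroup.eq_iff_sub_mem.1 h)
  refine ⟨y - m • 1, ?_, ?_⟩
  · rw [AddCircle.coe_sub, AddCircle.coe_zsmul, AddCircle.coe_period, smul_zero, sub_zero]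
  · rw [zsmul_one] at hm ⊢
    rw [D.semiconjLift.map_sub_int, hm, sub_sub_cancel]

theorem eq_or_eq_or_eq_of_collapse_eq {a b c : 𝕋} (ha : a ∈ D.K) (hb : b ∈ D.K) (hc : c ∈ D.K)
    (hab : D.collapse a = D.collapse b) (hac : D.collapse a = D.collapse c) :
    a = b ∨ b = c ∨ a = c := by
  obtain ⟨x, rfl⟩ := QuotientAddGroup.mk_surjective a
  obtain ⟨y, rfl, hy⟩ := D.exists_coe_eq_semiconjLift_eq hab.symm
  obtain ⟨z, rfl, hz⟩ := D.exists_coe_eq_semiconjLift_eq hac.symm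
  by_contra! hne
  have between : ∀ {p q r : ℝ}, p < q → q < r → D.semiconjLift p = D.semiconjLift r →
      (q : 𝕋) ∉ D.K := fun hpq hqr hpr => D.coe_notMem_K_of_semiconjLift_eq hpr ⟨hpq, hqr⟩
  rcases lt_or_gt_of_ne (ne_of_apply_ne _ hne.1) with hxy | hxy <;>
  rcases lt_or_gt_of_ne (ne_of_apply_ne _ hne.2.1) with hyz | hyz <;>
  rcases lt_or_gt_of_ne (ne_of_apply_ne _ hne.2.2) with hxz | hxz
  all_goals first
    | linarith
    | exact between hxy hyz hz.symm hb
    | exact between hxz hyz hy.symm hc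
    | exact between hxz hxy (hz.trans hy.symm) ha
    | exact between hxy hxz (hy.trans hz.symm) ha
    | exact between hyz hxz hy hc
    | exact between hyz hxy hz hb

theorem finite_K_inter_collapse_preimage (r : 𝕋) : (D.K ∩ D.collapse ⁻¹' {r}).Finite := by
  rcases (D.K ∩ D.collapse ⁻¹' {r}).eq_empty_or_nonempty with h | ⟨a, ha, har⟩
  · simp [h]
  have hsub : ((D.K ∩ D.collapse ⁻¹' {r}) \ {a}).Subsingleton := by
    rintro b ⟨⟨hb, hbr⟩, hba⟩ c ⟨⟨hc, hcr⟩, hca⟩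
    rcases D.eq_or_eq_or_eq_of_collapse_eq ha hb hc (har.trans hbr.symm) (har.trans hcr.symm)
      with e | e | e
    exacts [absurd e.symm hba, e, absurd e.symm hca]
  exact (hsub.finite.insert a).subset (by rw [insert_sdiff_singleton]; exact subset_insert _ _)

theorem exists_collapse_notMem_of_eventually {x : D.K} {P : D.K → Prop} (hP : ∀ᶠ y in 𝓝 x, P y)
    {F : Set 𝕋} (hF : F.Finite) : ∃ y, P y ∧ D.collapse y ∉ F := by
  set B := D.K ∩ D.collapse ⁻¹' F
  have hB : B.Finite := by
    refine (hF.biUnion fun r _ => D.finite_K_inter_collapse_preimage r).subset ?_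
    rintro b ⟨hb, hbF⟩
    exact mem_biUnion hbF ⟨hb, rfl⟩
  obtain ⟨U, hU, hUP⟩ := mem_nhds_subtype _ _ _ |>.1 hP
  have hU' : U \ (B \ {(x : 𝕋)}) ∈ 𝓝 (x : 𝕋) :=
    sdiff_mem hU ((hB.sdiff).isClosed.compl_mem_nhds fun h => h.2 rfl)
  obtain ⟨y, ⟨⟨hyU, hyB⟩, hyK⟩, hyx⟩ := accPt_iff_nhds.1 (D.K_perf.acc x x.2) _ hU'
  exact ⟨⟨y, hyK⟩, hUP hyU, fun hyF => hyB ⟨⟨hyK, hyF⟩, hyx⟩⟩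

/-- The images under `collapse` are made distinct by moving two of the points slightly, which is
possible since `collapse` is finite-to-one on the perfect set `K`. -/
theorem of_sbtw_collapse {R : D.K → D.K → D.K → Prop}
    (hR : IsClosed {t : D.K × D.K × D.K | R t.1 t.2.1 t.2.2})
    (h : ∀ a b c : D.K, sbtw (D.collapse a) (D.collapse b) (D.collapse c) → R a b c)
    {a b c : D.K} (habc : sbtw (a : 𝕋) b c) : R a b c := by
  by_contra hR'
  set O := {t : D.K × D.K × D.K | sbtw (t.1 : 𝕋) t.2.1 t.2.2 ∧ ¬R t.1 t.2.1 t.2.2}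
  have hO : IsOpen O := .inter (isOpen_setOf_sbtw.preimage (by fun_prop :
    Continuous fun t : D.K × D.K × D.K => ((t.1 : 𝕋), (t.2.1 : 𝕋), (t.2.2 : 𝕋)))) hR.isOpen_compl
  have hev : ∀ᶠ b' in 𝓝 b, ∀ᶠ c' in 𝓝 c, (a, b', c') ∈ O := by
    have : ∀ᶠ t in 𝓝 a ×ˢ (𝓝 b ×ˢ 𝓝 c), t ∈ O := by
      rw [← nhds_prod_eq, ← nhds_prod_eq]
      exact hO.mem_nhds ⟨habc, hR'⟩
    exact this.curry.self_of_nhds.curry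
  obtain ⟨b', hb', hb'a⟩ :=
    D.exists_collapse_notMem_of_eventually hev (finite_singleton (D.collapse a))
  obtain ⟨c', ⟨hsbtw, hnR⟩, hc'⟩ := D.exists_collapse_notMem_of_eventually hb'
    ((finite_singleton (D.collapse a)).insert (D.collapse b'))
  refine hnR (h _ _ _ (sbtw_of_btw_of_ne (D.btw_collapse hsbtw.btw) (Ne.symm hb'a) ?_ ?_))
  · exact fun e => hc' (.inl e.symm)
  · exact fun e => hc' (.inr e)

theorem btw_of_forall_sbtw_collapse {v : D.K → 𝕋} (hv : Continuous v)
    (h : ∀ a b c : D.K, sbtw (D.collapse a) (D.collapse b) (D.collapse c) → btw (v a) (v b) (v c))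
    {a b c : D.K} (habc : btw (a : 𝕋) b c) : btw (v a) (v b) (v c) := by
  by_cases hs : sbtw (a : 𝕋) b c
  · exact D.of_sbtw_collapse (R := fun a b c => btw (v a) (v b) (v c))
      (isClosed_setOf_btw.preimage (by fun_prop :
        Continuous fun t : D.K × D.K × D.K => (v t.1, v t.2.1, v t.2.2))) h hs
  · exact btw_apply_of_btw_of_not_sbtw Subtype.val_injective v habc hs

def hK : D.K → D.K := D.mapsTo_h.restrict _ _ _

theorem coe_hK (x : D.K) : (D.hK x : 𝕋) = D.h x := rfl

theorem coe_hK_iterate (n : ℕ) (x : D.K) : (D.hK^[n] x : 𝕋) = D.h^[n] x :=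
  D.mapsTo_h.coe_iterate_restrict x n

theorem h_iterate_coe (n : ℕ) (x : ℝ) : D.h^[n] (x : 𝕋) = (D.lift^[n] x : 𝕋) :=
  ((Function.Semiconj.iterate_right (fun y => D.lift_proj y) n) x).symm

theorem collapse_eq_of_mem_Ioo_iterate {x y s : ℝ} (hπ : D.semiconjLift x = D.semiconjLift y)
    {n : ℕ} (hs : s ∈ Ioo (D.lift^[n] x) (D.lift^[n] y)) :
    D.collapse s = D.collapse x + (n : ℤ) • (D.rot : 𝕋) := by
  rw [collapse_coe, collapse_coe, D.semiconjLift_eq_of_mem_Icc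
    (by simp only [semiconjLift_iterate_lift, hπ]) (Ioo_subset_Icc_self hs),
    semiconjLift_iterate_lift, AddCircle.coe_add, ← AddCircle.coe_zsmul, zsmul_eq_mul,
    Int.cast_natCast]

theorem pairwise_disjoint_image_coe_Ioo_iterate {x y : ℝ}
    (hπ : D.semiconjLift x = D.semiconjLift y) :
    Pairwise fun m n => Disjoint (((↑) : ℝ → 𝕋) '' Ioo (D.lift^[m] x) (D.lift^[m] y))
      (((↑) : ℝ → 𝕋) '' Ioo (D.lift^[n] x) (D.lift^[n] y)) := by
  intro m n hmn
  refine disjoint_left.2 ?_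
  rintro _ ⟨s, hs, rfl⟩ ⟨t, ht, hts⟩
  have hrot := (D.collapse_eq_of_mem_Ioo_iterate hπ hs).symm.trans
    (hts ▸ D.collapse_eq_of_mem_Ioo_iterate hπ ht)
  rw [add_right_inj, ← sub_eq_zero, ← sub_smul] at hrot
  exact hmn (by exact_mod_cast sub_eq_zero.1 (D.eq_zero_of_zsmul_rot_eq_zero hrot))

theorem tendsto_dist_hK_iterate {a b : D.K} {x y : ℝ} (hxa : (x : 𝕋) = a) (hyb : (y : 𝕋) = b)
    (hxy : x ≤ y) (hπ : D.semiconjLift x = D.semiconjLift y) :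
    Tendsto (fun n => dist (D.hK^[n] a) (D.hK^[n] b)) atTop (𝓝 0) := by
  have hle : ∀ n, D.lift^[n] x ≤ D.lift^[n] y := fun n => (D.lift_mono.iterate n).monotone hxy
  have hle_add_one : ∀ n, D.lift^[n] y ≤ D.lift^[n] x + 1 := fun n => le_of_not_gt fun hlt => by
    have := D.semiconjLift.monotone hlt.le
    rw [CircleDeg1Lift.map_add_one, semiconjLift_iterate_lift, semiconjLift_iterate_lift,
      hπ] at this
    linarith
  refine squeeze_zero (fun _ => dist_nonneg) (fun n => ?_)
    (tendsto_sub_of_pairwise_disjoint_image_coe_Ioo hle hle_add_one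
      (D.pairwise_disjoint_image_coe_Ioo_iterate hπ))
  rw [Subtype.dist_eq, coe_hK_iterate, coe_hK_iterate, ← hxa, ← hyb, h_iterate_coe,
    h_iterate_coe, dist_eq_norm, ← AddCircle.coe_sub]
  exact (UnitAddCircle.norm_coe_le_abs _).trans
    (by rw [abs_sub_comm, abs_of_nonneg (sub_nonneg.2 (hle n))])

end DenjoySystem

/-! ### Sub-systems with the same image -/

namespace WDS

variable {M : Type*} [TopologicalSpace M] {f : M → M}

section Conjugacy

variable (W₁ W₂ : WDS M f) (hrange : Set.range W₁.j = Set.range W₂.j)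

def conj : W₁.K ≃ₜ W₂.K :=
  W₁.j_emb.toHomeomorph.trans ((Homeomorph.setCongr hrange).trans W₂.j_emb.toHomeomorph.symm)

theorem j_conj (x : W₁.K) : W₂.j (conj W₁ W₂ hrange x) = W₁.j x := by
  have := congrArg Subtype.val
    (W₂.j_emb.toHomeomorph.apply_symm_apply (Homeomorph.setCongr hrange (W₁.j_emb.toHomeomorph x)))
  rw [IsEmbedding.toHomeomorph_apply_coe] at this
  exact this

theorem conj_conj (x : W₁.K) : conj W₂ W₁ hrange.symm (conj W₁ W₂ hrange x) = x :=
  W₁.j_emb.injective (by rw [j_conj, j_conj])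

theorem conj_hK (x : W₁.K) : conj W₁ W₂ hrange (W₁.hK x) = W₂.hK (conj W₁ W₂ hrange x) :=
  W₂.j_emb.injective <| by rw [j_conj, W₁.equivar x _ rfl, W₂.equivar _ _ rfl, j_conj]

/-- Two points of `K₁` in the same fibre of `collapse` have asymptotic forward orbits. -/
theorem collapse_conj_eq {a b : W₁.K} (h : W₁.collapse a = W₁.collapse b) :
    W₂.collapse (conj W₁ W₂ hrange a) = W₂.collapse (conj W₁ W₂ hrange b) := by
  have := isCompact_iff_compactSpace.1 W₁.K_cpt
  have key : ∀ {a b : W₁.K} {x y : ℝ}, (x : 𝕋) = a → (y : 𝕋) = b → x ≤ y →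
      W₁.semiconjLift x = W₁.semiconjLift y →
      W₂.collapse (conj W₁ W₂ hrange a) = W₂.collapse (conj W₁ W₂ hrange b) :=
    fun hxa hyb hxy hπ => eq_of_tendsto_dist_iterate (T := W₁.hK) (c := (W₂.rot : 𝕋))
      (ψ := fun x => W₂.collapse (conj W₁ W₂ hrange x)) (by fun_prop)
      (fun x => by rw [conj_hK, DenjoySystem.coe_hK, DenjoySystem.collapse_h])
      (W₁.tendsto_dist_hK_iterate hxa hyb hxy hπ)
  obtain ⟨x, hxa⟩ := QuotientAddGroup.mk_surjective (a : 𝕋)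
  obtain ⟨y, hyb, hπ⟩ := W₁.exists_coe_eq_semiconjLift_eq (hxa ▸ h.symm)
  rcases le_total x y with hxy | hyx
  · exact key hxa hyb hxy hπ.symm
  · exact (key hyb hxa hyx hπ).symm

def inducedMap : C(𝕋, 𝕋) :=
  W₁.isQuotientMap_collapseK.lift (W₂.collapseK.comp (conj W₁ W₂ hrange))
    fun _ _ h => collapse_conj_eq W₁ W₂ hrange h

theorem inducedMap_collapse (x : W₁.K) :
    inducedMap W₁ W₂ hrange (W₁.collapse x) = W₂.collapse (conj W₁ W₂ hrange x) :=
  DFunLike.congr_fun (W₁.isQuotientMap_collapseK.lift_comp (W₂.collapseK.comp (conj W₁ W₂ hrange))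
    fun _ _ h => collapse_conj_eq W₁ W₂ hrange h) x

theorem injective_inducedMap : Function.Injective (inducedMap W₁ W₂ hrange) := by
  intro s t hst
  obtain ⟨a, rfl⟩ := W₁.isQuotientMap_collapseK.surjective s
  obtain ⟨b, rfl⟩ := W₁.isQuotientMap_collapseK.surjective t
  rw [DenjoySystem.collapseK_apply, DenjoySystem.collapseK_apply, inducedMap_collapse,
    inducedMap_collapse] at hst
  rw [DenjoySystem.collapseK_apply, DenjoySystem.collapseK_apply]
  simpa only [conj_conj] using collapse_conj_eq W₂ W₁ hrange.symm hst

theorem btw_conj_iff_of_sbtw_map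
    (hg : ∀ s t r, sbtw s t r →
      sbtw (inducedMap W₁ W₂ hrange s) (inducedMap W₁ W₂ hrange t) (inducedMap W₁ W₂ hrange r))
    (a b c : W₁.K) :
    btw (conj W₁ W₂ hrange a : 𝕋) (conj W₁ W₂ hrange b) (conj W₁ W₂ hrange c) ↔ btw (a : 𝕋) b c :=
  btw_iff_of_injective (u := fun x : W₁.K => (x : 𝕋)) (v := fun x => (conj W₁ W₂ hrange x : 𝕋))
    (Subtype.val_injective.comp (conj W₁ W₂ hrange).injective)
    (fun _ _ _ => W₁.btw_of_forall_sbtw_collapse (v := fun x => (conj W₁ W₂ hrange x : 𝕋))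
      (by fun_prop) fun _ _ _ h => W₂.btw_of_sbtw_collapse <| by
        simpa only [inducedMap_collapse] using hg _ _ _ h) a b c

theorem btw_conj_iff_of_sbtw_map_rev
    (hg : ∀ s t r, sbtw s t r →
      sbtw (inducedMap W₁ W₂ hrange r) (inducedMap W₁ W₂ hrange t) (inducedMap W₁ W₂ hrange s))
    (a b c : W₁.K) :
    btw (conj W₁ W₂ hrange c : 𝕋) (conj W₁ W₂ hrange b) (conj W₁ W₂ hrange a) ↔
      btw (a : 𝕋) b c := by
  rw [← btw_neg_iff]
  exact btw_iff_of_injective (u := fun x : W₁.K => (x : 𝕋))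
    (v := fun x => -(conj W₁ W₂ hrange x : 𝕋))
    (neg_injective.comp (Subtype.val_injective.comp (conj W₁ W₂ hrange).injective))
    (fun _ _ _ => W₁.btw_of_forall_sbtw_collapse (v := fun x => -(conj W₁ W₂ hrange x : 𝕋))
      (by fun_prop) fun _ _ _ h => btw_neg_iff.2 <|
      W₂.btw_of_sbtw_collapse (by simpa only [inducedMap_collapse] using hg _ _ _ h)) a b c

end Conjugacy

theorem orderGraph_eq_of_btw_iff {W₁ W₂ : WDS M f} (φ : W₁.K ≃ W₂.K) (hj : ∀ x, W₂.j (φ x) = W₁.j x)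
    (h : ∀ a b c, btw (φ a : 𝕋) (φ b) (φ c) ↔ btw (a : 𝕋) b c) : W₁.orderGraph = W₂.orderGraph := by
  ext p
  simp only [orderGraph, circBtw_iff_btw, mem_ofPred_eq]
  constructor
  · rintro ⟨a, b, c, habc, rfl⟩
    exact ⟨φ a, φ b, φ c, (h a b c).2 habc, by simp only [hj]⟩
  · rintro ⟨a, b, c, habc, rfl⟩
    refine ⟨φ.symm a, φ.symm b, φ.symm c, (h _ _ _).1 (by simpa only [φ.apply_symm_apply]), ?_⟩
    simp only [← hj, φ.apply_symm_apply]

theorem orderGraph_eq_revGraph_of_btw_iff {W₁ W₂ : WDS M f} (φ : W₁.K ≃ W₂.K)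
    (hj : ∀ x, W₂.j (φ x) = W₁.j x) (h : ∀ a b c, btw (φ c : 𝕋) (φ b) (φ a) ↔ btw (a : 𝕋) b c) :
    W₁.orderGraph = W₂.revGraph := by
  ext ⟨p₁, p₂, p₃⟩
  simp only [revGraph, orderGraph, circBtw_iff_btw, mem_ofPred_eq, Prod.mk.injEq]
  constructor
  · rintro ⟨a, b, c, habc, rfl, rfl, rfl⟩
    exact ⟨φ c, φ b, φ a, (h a b c).2 habc, by simp only [hj, and_self]⟩
  · rintro ⟨c, b, a, habc, rfl, rfl, rfl⟩
    refine ⟨φ.symm a, φ.symm b, φ.symm c, (h _ _ _).1 (by simpa only [φ.apply_symm_apply]), ?_⟩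
    simp only [← hj, φ.apply_symm_apply, and_self]

end WDS

theorem equivalent_WDS_order_general
    {M : Type*} [MetricSpace M] (f : M → M)
    (W₁ W₂ : WDS M f) (hrange : Set.range W₁.j = Set.range W₂.j) :
    W₁.orderGraph = W₂.orderGraph ∨ W₁.orderGraph = W₂.revGraph := by
  have hj := WDS.j_conj W₁ W₂ hrange
  rcases (WDS.inducedMap W₁ W₂ hrange).continuous.sbtw_map_or_sbtw_map_rev
    (WDS.injective_inducedMap W₁ W₂ hrange) with hg | hg
  · exact .inl <| WDS.orderGraph_eq_of_btw_iff (WDS.conj W₁ W₂ hrange).toEquiv hj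
      (WDS.btw_conj_iff_of_sbtw_map W₁ W₂ hrange hg)
  · exact .inr <| WDS.orderGraph_eq_revGraph_of_btw_iff (WDS.conj W₁ W₂ hrange).toEquiv hj
      (WDS.btw_conj_iff_of_sbtw_map_rev W₁ W₂ hrange hg)

/-- Two equivalent weak Denjoy sub-systems for a same homeomorphism have the same
order graph, up to reversal. -/
theorem equivalent_WDS_order
    {M : Type*} [MetricSpace M] (f : M → M) (hf : IsHomeomorph f)
    (W₁ W₂ : WDS M f) (hrange : Set.range W₁.j = Set.range W₂.j) :
    W₁.orderGraph = W₂.orderGraph ∨ W₁.orderGraph = W₂.revGraph :=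
  equivalent_WDS_order_general f W₁ W₂ hrange
end
end

section
/- Let α ∈ (0,1) be an irrational real number. Let K₀ ⊆ 𝕋 = ℝ/ℤ be the image of the interval [0, α] under the projection ℝ → ℝ/ℤ and K₁ the image of [α, 1]. Then for every sequence n : ℤ → {0,1} there exists at most one θ ∈ 𝕋 such that θ + kα (mod 1) belongs to K_{n(k)} for every k ∈ ℤ. -/
open Set

/-!
If `θ₁ ≠ θ₂` had the same itinerary, put `d = θ₂ - θ₁ ≠ 0`. The orbit of `θ₁` is dense and the
arcs are closed, so every `x` would satisfy `x ∈ K₀` or `d + x ∈ K₁`. But the open arc `(α, 1)`,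
the complement of `K₀`, contains a point `x` with `d + x` in the open arc `(0, α)`, the complement
of `K₁`.
-/

theorem mem_or_sub_add_mem_of_denseRange_of_itinerary {G ι : Type*} [AddGroup G]
    [TopologicalSpace G] [ContinuousAdd G] {K : Fin 2 → Set G} (hK0 : IsClosed (K 0))
    (hK1 : IsClosed (K 1)) {v : ι → G} {n : ι → Fin 2} {θ₁ θ₂ : G}
    (hdense : DenseRange fun k => θ₁ + v k) (hθ₁ : ∀ k, θ₁ + v k ∈ K (n k))
    (hθ₂ : ∀ k, θ₂ + v k ∈ K (n k)) (x : G) : x ∈ K 0 ∨ θ₂ - θ₁ + x ∈ K 1 := by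
  refine hdense.induction_on x (hK0.union (hK1.preimage (continuous_const_add _))) fun k => ?_
  by_cases hk : n k = 0
  · exact Or.inl (hk ▸ hθ₁ k)
  · right
    rw [← add_assoc, sub_add_cancel]
    exact Fin.eq_one_of_ne_zero _ hk ▸ hθ₂ k

namespace AddCircle

theorem denseRange_add_intCast_mul {p α : ℝ} (hα : Irrational (α / p)) (θ : AddCircle p) :
    DenseRange fun k : ℤ => θ + ((k * α : ℝ) : AddCircle p) := by
  have := (Homeomorph.addLeft θ).surjective.denseRange.comp (denseRange_zsmul_coe_iff.mpr hα)
    (continuous_const_add θ)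
  simpa [Function.comp_def, ← zsmul_eq_mul, coe_zsmul] using this

theorem isClosed_coe_image_Icc {p : ℝ} (a b : ℝ) :
    IsClosed (((↑) : ℝ → AddCircle p) '' Icc a b) :=
  (isCompact_Icc.image (AddCircle.continuous_mk' p)).isClosed

theorem coe_notMem_image_Icc {p : ℝ} [Fact (0 < p)] {a b x : ℝ} (hx : x ∈ Ioo b (a + p)) :
    (x : AddCircle p) ∉ ((↑) : ℝ → AddCircle p) '' Icc a b := by
  rintro ⟨y, ⟨hay, hyb⟩, hyx⟩
  have := (coe_eq_coe_iff_of_mem_Ico (a := a) ⟨hay, by linarith [hx.1, hx.2]⟩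
    ⟨by linarith [hx.1], hx.2⟩).1 hyx
  linarith [hx.1]

theorem exists_notMem_image_Icc_and_add_notMem_image_Icc {α : ℝ} (h0 : 0 < α) (h1 : α < 1)
    {d : UnitAddCircle} (hd : d ≠ 0) :
    ∃ x : UnitAddCircle, x ∉ ((↑) : ℝ → UnitAddCircle) '' Icc 0 α ∧
      d + x ∉ ((↑) : ℝ → UnitAddCircle) '' Icc α 1 := by
  obtain ⟨c, ⟨hc0, hc1⟩, rfl⟩ := eq_coe_Ico d
  have hc : 0 < c := hc0.lt_of_ne (by rintro rfl; simp at hd)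
  -- `x = 1 - c (1 - α)` lies in `(α, 1)` and `x + c = 1 + α c` lies in `(1, 1 + α)`.
  refine ⟨((1 - c * (1 - α) : ℝ) : UnitAddCircle), coe_notMem_image_Icc ⟨?_, ?_⟩, ?_⟩
  · nlinarith
  · nlinarith
  · rw [← coe_add]
    exact coe_notMem_image_Icc ⟨by nlinarith, by nlinarith⟩

end AddCircle

open AddCircle in
/-- For an irrational rotation, any binary itinerary with respect to the two arcs
`[0, α]` and `[α, 1]` is realized by at most one point of the circle. -/
theorem rotation_itinerary_unique
    (α : ℝ) (hirr : Irrational α) (h0 : 0 < α) (h1 : α < 1)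
    (K : Fin 2 → Set UnitAddCircle)
    (hK0 : K 0 = (fun x : ℝ => (x : UnitAddCircle)) '' Set.Icc 0 α)
    (hK1 : K 1 = (fun x : ℝ => (x : UnitAddCircle)) '' Set.Icc α 1)
    (n : ℤ → Fin 2) (θ₁ θ₂ : UnitAddCircle)
    (hθ₁ : ∀ k : ℤ, θ₁ + ((((k : ℝ) * α : ℝ)) : UnitAddCircle) ∈ K (n k))
    (hθ₂ : ∀ k : ℤ, θ₂ + ((((k : ℝ) * α : ℝ)) : UnitAddCircle) ∈ K (n k)) :
    θ₁ = θ₂ := by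
  by_contra hne
  obtain ⟨x, hx0, hx1⟩ :=
    exists_notMem_image_Icc_and_add_notMem_image_Icc h0 h1 (sub_ne_zero.mpr (Ne.symm hne))
  have hdense := denseRange_add_intCast_mul (by rwa [div_one]) θ₁
  rcases mem_or_sub_add_mem_of_denseRange_of_itinerary (hK0 ▸ isClosed_coe_image_Icc _ _)
    (hK1 ▸ isClosed_coe_image_Icc _ _) hdense hθ₁ hθ₂ x with h | h
  · exact hx0 (hK0 ▸ h)
  · exact hx1 (hK1 ▸ h)
end

section
/- For every irrational α₀ ∈ (0,1) and every ε > 0 there exists δ > 0 such that for every irrational α ∈ (0,1) with |α − α₀| < δ, the Hausdorff distance between X_α and X_{α₀} (with respect to a fixed metric on Σ₂ inducing the product topology, e.g. d(u,v) = sup_{k∈ℤ} |u(k) − v(k)|/(|k|+1)) is less than ε. -/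
/-!
The word of `s_α` on `[n - N, n + N]` is read off the integer parts `⌊iα + nα⌋`,
`-N - 1 ≤ i ≤ N`: a letter is `0` exactly when the integer part jumps. For `α` near `α₀`,
at most one of the points `iα + x` is close to an integer (two of them would make some
`(i - j)α₀` nearly integral), so the start `y = x + j(α - α₀)`, exact at that index `j`,
reproduces all these integer parts for `α₀`. Density of the orbit of the irrational rotation
and right-continuity of the floor turn `y` into an orbit point. Hence `X_α` and `X_{α₀}` have
the same words of length `2N + 1`, which puts them within `1/(N + 2)` of each other.
-/

open Set

noncomputable section

/-- The two-sided Sturmian sequence of angle `α`: `s_α(k) = 0` iff the fractional part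
of `kα` lies in `[0, α)`. -/
def sturmian (α : ℝ) : ℤ → Fin 2 := fun k => if Int.fract ((k : ℝ) * α) < α then 0 else 1

/-- The closure of the shift orbit of the Sturmian sequence of angle `α`. -/
def sturmianHull (α : ℝ) : Set (ℤ → Fin 2) :=
  closure {v | ∃ n : ℤ, ∀ k : ℤ, v k = sturmian α (k + n)}

/-- A metric on `Σ₂ = {0,1}^ℤ` inducing the product topology:
`d(u,v) = sup_k |u k - v k| / (|k| + 1)`. -/
def dSeq (u v : ℤ → Fin 2) : ℝ :=
  ⨆ k : ℤ, |((u k : ℕ) : ℝ) - ((v k : ℕ) : ℝ)| / (|(k : ℝ)| + 1)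

/-- The Hausdorff distance on subsets of `Σ₂` associated to the metric `dSeq`. -/
def hausdorffDistSeq (A B : Set (ℤ → Fin 2)) : ℝ :=
  max (⨆ a : A, ⨅ b : B, dSeq a b) (⨆ b : B, ⨅ a : A, dSeq a b)

open Filter Topology

namespace Sturmian

def rotationCoding (β x : ℝ) (k : ℤ) : Fin 2 :=
  if Int.fract (k * β + x) < β then 0 else 1

lemma sturmian_add_eq_rotationCoding (α : ℝ) (n k : ℤ) :
    sturmian α (k + n) = rotationCoding α (n * α) k := by
  simp only [sturmian, rotationCoding, Int.cast_add, add_mul]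

lemma rotationCoding_add_intCast (β x : ℝ) (p : ℤ) :
    rotationCoding β (x + p) = rotationCoding β x := by
  funext k
  simp only [rotationCoding, ← add_assoc, Int.fract_add_intCast]

lemma fract_lt_iff_floor_sub_ne {t β : ℝ} (hβ : 0 ≤ β) : Int.fract t < β ↔ ⌊t - β⌋ ≠ ⌊t⌋ := by
  have hle : ⌊t - β⌋ ≤ ⌊t⌋ := Int.floor_mono (by linarith)
  rw [← hle.lt_iff_ne, Int.floor_lt, Int.fract, sub_lt_comm]

lemma rotationCoding_eq_of_floor_eq {β γ x y : ℝ} {k : ℤ} (hβ : 0 ≤ β) (hγ : 0 ≤ γ)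
    (hprev : ⌊((k - 1 : ℤ) : ℝ) * β + x⌋ = ⌊((k - 1 : ℤ) : ℝ) * γ + y⌋)
    (hcurr : ⌊(k : ℝ) * β + x⌋ = ⌊(k : ℝ) * γ + y⌋) :
    rotationCoding β x k = rotationCoding γ y k := by
  have hsub (θ z : ℝ) : (k : ℝ) * θ + z - θ = ((k - 1 : ℤ) : ℝ) * θ + z := by push_cast; ring
  simp only [rotationCoding, fract_lt_iff_floor_sub_ne hβ, fract_lt_iff_floor_sub_ne hγ, hsub,
    hprev, hcurr]

lemma eqOn_rotationCoding_of_floor_eq {β γ x y : ℝ} {N : ℕ} (hβ : 0 ≤ β) (hγ : 0 ≤ γ)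
    (h : ∀ i ∈ Icc (-(N : ℤ) - 1) N, ⌊(i : ℝ) * β + x⌋ = ⌊(i : ℝ) * γ + y⌋) :
    EqOn (rotationCoding β x) (rotationCoding γ y) (Icc (-(N : ℤ)) N) := by
  rintro k ⟨hk₁, hk₂⟩
  exact rotationCoding_eq_of_floor_eq hβ hγ (h (k - 1) ⟨by omega, by omega⟩)
    (h k ⟨by omega, by omega⟩)

lemma floor_add_eventually_eq (c x : ℝ) : ∀ᶠ s in 𝓝[≥] x, ⌊c + s⌋ = ⌊c + x⌋ := by
  have hx : x < x + (⌊c + x⌋ + 1 - (c + x)) := by linarith [Int.lt_floor_add_one (c + x)]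
  filter_upwards [Ico_mem_nhdsGE hx] with s hs
  rw [Int.floor_eq_iff]
  constructor <;> linarith [hs.1, hs.2, Int.floor_le (c + x)]

lemma exists_intCast_mul_add_intCast_mem_Ioo {β a b : ℝ} (hβ : Irrational β) (hab : a < b) :
    ∃ n p : ℤ, (n : ℝ) * β + p ∈ Ioo a b := by
  have hdense := dense_addSubgroupClosure_pair_iff.2 (by rwa [div_one] : Irrational (β / 1))
  obtain ⟨z, hz, hzab⟩ := hdense.exists_between hab
  obtain ⟨n, p, rfl⟩ := AddSubgroup.mem_closure_pair.1 hz
  exact ⟨n, p, by simpa [zsmul_eq_mul] using hzab⟩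

lemma exists_eqOn_rotationCoding_orbit {β : ℝ} (hβirr : Irrational β) (hβ : 0 ≤ β) (x : ℝ)
    (N : ℕ) : ∃ n : ℤ,
      EqOn (rotationCoding β x) (rotationCoding β (n * β)) (Icc (-(N : ℤ)) N) := by
  have hev : ∀ᶠ s in 𝓝[≥] x,
      ∀ i ∈ Icc (-(N : ℤ) - 1) N, ⌊(i : ℝ) * β + x⌋ = ⌊(i : ℝ) * β + s⌋ :=
    (finite_Icc _ _).eventually_all.2 fun i _ =>
      (floor_add_eventually_eq _ x).mono fun _ h => h.symm
  obtain ⟨u, hxu, hu⟩ := mem_nhdsGE_iff_exists_Ico_subset.1 hev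
  obtain ⟨n, p, hnp⟩ := exists_intCast_mul_add_intCast_mem_Ioo hβirr hxu
  refine ⟨n, ?_⟩
  rw [← rotationCoding_add_intCast β (n * β) p]
  exact eqOn_rotationCoding_of_floor_eq hβ hβ (hu ⟨hnp.1.le, hnp.2⟩)

lemma floor_sub_eq_of_abs_lt {t e : ℝ} (h : |e| < |t - round t|) : ⌊t - e⌋ = ⌊t⌋ := by
  have hfl := Int.floor_le t
  have hfu := Int.lt_floor_add_one t
  have hlow : |t - round t| ≤ t - ⌊t⌋ :=
    (round_le t ⌊t⌋).trans_eq (abs_of_nonneg (by linarith))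
  have hupp : |t - round t| ≤ ⌊t⌋ + 1 - t :=
    (round_le t (⌊t⌋ + 1)).trans_eq (by rw [abs_sub_comm, abs_of_nonneg] <;> push_cast <;> linarith)
  rw [Int.floor_eq_iff]
  constructor <;> linarith [le_abs_self e, neg_abs_le e]

lemma abs_sub_round_sub_le (a b : ℝ) :
    |a - b - round (a - b)| ≤ |a - round a| + |b - round b| :=
  calc |a - b - round (a - b)| ≤ |a - b - ((round a - round b : ℤ) : ℝ)| := round_le _ _
    _ = |(a - round a) - (b - round b)| := by push_cast; ring_nf
    _ ≤ |a - round a| + |b - round b| := abs_sub _ _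

lemma abs_sub_round_le_add (a b : ℝ) : |a - round a| ≤ |a - b| + |b - round b| :=
  (round_le a (round b)).trans (abs_sub_le a b _)

lemma exists_pos_lt_abs_sub_round {α : ℝ} (hα : Irrational α) (M : ℕ) :
    ∃ η > 0, ∀ d : ℤ, d ≠ 0 → |d| ≤ M → η < |d * α - round (d * α)| := by
  have hev : ∀ᶠ η in 𝓝[>] (0 : ℝ), ∀ d ∈ (Finset.Icc (-(M : ℤ)) M).erase 0,
      η < |d * α - round (d * α)| := by
    refine (Finset.eventually_all _).2 fun d hd => nhdsWithin_le_nhds (eventually_lt_nhds ?_)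
    exact abs_pos.2 (sub_ne_zero.2 ((hα.intCast_mul (Finset.ne_of_mem_erase hd)).ne_int _))
  obtain ⟨η, hη, hη₀⟩ := (hev.and self_mem_nhdsWithin).exists
  exact ⟨η, hη₀, fun d hd hdM => hη d (Finset.mem_erase.2 ⟨hd, Finset.mem_Icc.2 (abs_le.1 hdM)⟩)⟩

lemma exists_eqOn_rotationCoding_of_near {β γ : ℝ} {N : ℕ} (hβ : 0 ≤ β) (hγ : 0 ≤ γ)
    (hsep : ∀ d : ℤ, d ≠ 0 → |d| ≤ 2 * N + 1 →
      2 * ((2 * N + 1) * |β - γ|) < |d * β - round (d * β)|) (x : ℝ) :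
    ∃ y, EqOn (rotationCoding β x) (rotationCoding γ y) (Icc (-(N : ℤ)) N) := by
  obtain ⟨j, hj, hmin⟩ := (Finset.Icc (-(N : ℤ) - 1) N).exists_min_image
    (fun i => |i * β + x - round (i * β + x)|) ⟨0, by simp⟩
  rw [Finset.mem_Icc] at hj
  -- every `i ≠ j` is farther than `(2N + 1)|β - γ|` from the integers, by minimality and `hsep`
  refine ⟨x + j * (β - γ), eqOn_rotationCoding_of_floor_eq hβ hγ fun i hi => ?_⟩
  rw [show (i : ℝ) * γ + (x + j * (β - γ)) = i * β + x - (i - j) * (β - γ) by ring]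
  rcases eq_or_ne i j with rfl | hij
  · rw [sub_self, zero_mul, sub_zero]
  have hijN : |i - j| ≤ 2 * (N : ℤ) + 1 := abs_le.2 ⟨by linarith [hi.1], by linarith [hi.2]⟩
  have hijN' : |(i : ℝ) - j| ≤ 2 * N + 1 := by exact_mod_cast hijN
  have hdist := abs_sub_round_sub_le (i * β + x) (j * β + x)
  rw [show (i : ℝ) * β + x - (j * β + x) = ((i - j : ℤ) : ℝ) * β by push_cast; ring] at hdist
  have hsepij := hsep (i - j) (sub_ne_zero.2 hij) hijN
  have hmini := hmin i (Finset.mem_Icc.2 hi)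
  refine (floor_sub_eq_of_abs_lt ?_).symm
  rw [abs_mul]
  nlinarith [mul_le_mul_of_nonneg_right hijN' (abs_nonneg (β - γ))]

lemma exists_eqOn_sturmian_of_near {β γ : ℝ} {N : ℕ} (hβ : 0 ≤ β) (hγ : 0 ≤ γ)
    (hγirr : Irrational γ) (hsep : ∀ d : ℤ, d ≠ 0 → |d| ≤ 2 * N + 1 →
      2 * ((2 * N + 1) * |β - γ|) < |d * β - round (d * β)|) (n : ℤ) :
    ∃ m : ℤ, EqOn (fun k => sturmian β (k + n)) (fun k => sturmian γ (k + m))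
      (Icc (-(N : ℤ)) N) := by
  obtain ⟨y, hy⟩ := exists_eqOn_rotationCoding_of_near hβ hγ hsep (n * β)
  obtain ⟨m, hm⟩ := exists_eqOn_rotationCoding_orbit hγirr hγ y N
  refine ⟨m, fun k hk => ?_⟩
  simp only [sturmian_add_eq_rotationCoding]
  exact (hy hk).trans (hm hk)

lemma exists_pos_eqOn_sturmian_windows {α₀ : ℝ} (hα₀ : Irrational α₀) (hα₀pos : 0 < α₀) (N : ℕ) :
    ∃ δ > 0, ∀ α : ℝ, Irrational α → 0 < α → |α - α₀| < δ →
      (∀ n : ℤ, ∃ m : ℤ, EqOn (fun k => sturmian α (k + n)) (fun k => sturmian α₀ (k + m))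
        (Icc (-(N : ℤ)) N)) ∧
      (∀ m : ℤ, ∃ n : ℤ, EqOn (fun k => sturmian α₀ (k + m)) (fun k => sturmian α (k + n))
        (Icc (-(N : ℤ)) N)) := by
  obtain ⟨η, hη, hsep⟩ := exists_pos_lt_abs_sub_round hα₀ (2 * N + 1)
  refine ⟨η / (3 * (2 * N + 1)), by positivity, fun α hα hαpos hαδ => ⟨?_, ?_⟩⟩
  all_goals
    have hδ : 3 * ((2 * N + 1) * |α - α₀|) < η := by
      rw [lt_div_iff₀ (by positivity)] at hαδ; linarith
  · refine exists_eqOn_sturmian_of_near hαpos.le hα₀pos.le hα₀ fun d hd hdN => ?_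
    have hdN' : |(d : ℝ)| ≤ 2 * N + 1 := by exact_mod_cast hdN
    have hclose := abs_sub_round_le_add (d * α₀) (d * α)
    rw [← mul_sub, abs_mul, abs_sub_comm α₀] at hclose
    have := hsep d hd (by exact_mod_cast hdN)
    nlinarith [mul_le_mul_of_nonneg_right hdN' (abs_nonneg (α - α₀))]
  · refine exists_eqOn_sturmian_of_near hα₀pos.le hαpos.le hα fun d hd hdN => ?_
    rw [abs_sub_comm]
    linarith [hsep d hd (by exact_mod_cast hdN), abs_nonneg (α - α₀)]

lemma abs_sub_fin_two_le_one (a b : Fin 2) : |((a : ℕ) : ℝ) - ((b : ℕ) : ℝ)| ≤ 1 := by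
  fin_cases a <;> fin_cases b <;> norm_num

lemma dSeq_nonneg (u v : ℤ → Fin 2) : 0 ≤ dSeq u v :=
  Real.iSup_nonneg fun _ => by positivity

lemma dSeq_le_of_eqOn {u v : ℤ → Fin 2} {N : ℕ} (h : EqOn u v (Icc (-(N : ℤ)) N)) :
    dSeq u v ≤ 1 / (N + 2) := by
  refine ciSup_le fun k => ?_
  by_cases hk : k ∈ Icc (-(N : ℤ)) N
  · rw [h hk, sub_self, abs_zero, zero_div]
    positivity
  have hkN : (N : ℝ) + 1 ≤ |(k : ℝ)| := by
    rw [mem_Icc, not_and_or, not_le, not_le] at hk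
    have : (N : ℤ) + 1 ≤ |k| := by rcases hk with hk | hk <;> rw [le_abs] <;> omega
    exact_mod_cast this
  calc |((u k : ℕ) : ℝ) - ((v k : ℕ) : ℝ)| / (|(k : ℝ)| + 1) ≤ 1 / (|(k : ℝ)| + 1) :=
        div_le_div_of_nonneg_right (abs_sub_fin_two_le_one _ _) (by positivity)
    _ ≤ 1 / (N + 2) := one_div_le_one_div_of_le (by positivity) (by linarith)

lemma hausdorffDistSeq_le {A B : Set (ℤ → Fin 2)} {c : ℝ} (hc : 0 ≤ c)
    (hAB : ∀ a ∈ A, ∃ b ∈ B, dSeq a b ≤ c) (hBA : ∀ b ∈ B, ∃ a ∈ A, dSeq a b ≤ c) :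
    hausdorffDistSeq A B ≤ c := by
  refine max_le (Real.iSup_le (fun ⟨a, ha⟩ => ?_) hc) (Real.iSup_le (fun ⟨b, hb⟩ => ?_) hc)
  · obtain ⟨b, hb, hab⟩ := hAB a ha
    exact ciInf_le_of_le ⟨0, forall_mem_range.2 fun _ => dSeq_nonneg _ _⟩ ⟨b, hb⟩ hab
  · obtain ⟨a, ha, hab⟩ := hBA b hb
    exact ciInf_le_of_le ⟨0, forall_mem_range.2 fun _ => dSeq_nonneg _ _⟩ ⟨a, ha⟩ hab

lemma exists_eqOn_of_mem_sturmianHull {α : ℝ} {a : ℤ → Fin 2} (ha : a ∈ sturmianHull α)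
    (N : ℕ) : ∃ n : ℤ, EqOn a (fun k => sturmian α (k + n)) (Icc (-(N : ℤ)) N) := by
  have hnear : ∀ᶠ v in 𝓝 a, EqOn a v (Icc (-(N : ℤ)) N) :=
    (finite_Icc _ _).eventually_all.2 fun k _ =>
      (continuous_apply k).continuousAt.eventually_mem (isOpen_discrete {a k} |>.mem_nhds rfl)
        |>.mono fun _ h => (mem_singleton_iff.1 h).symm
  obtain ⟨v, ⟨n, hn⟩, hav⟩ := ((mem_closure_iff_frequently.1 ha).and_eventually hnear).exists
  exact ⟨n, fun k hk => (hav hk).trans (hn k)⟩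

lemma hausdorffDistSeq_sturmianHull_le {α β : ℝ} {N : ℕ}
    (hαβ : ∀ n : ℤ, ∃ m : ℤ, EqOn (fun k => sturmian α (k + n))
      (fun k => sturmian β (k + m)) (Icc (-(N : ℤ)) N))
    (hβα : ∀ m : ℤ, ∃ n : ℤ, EqOn (fun k => sturmian β (k + m))
      (fun k => sturmian α (k + n)) (Icc (-(N : ℤ)) N)) :
    hausdorffDistSeq (sturmianHull α) (sturmianHull β) ≤ 1 / (N + 2) := by
  refine hausdorffDistSeq_le (by positivity) (fun a ha => ?_) (fun b hb => ?_)
  · obtain ⟨n, hn⟩ := exists_eqOn_of_mem_sturmianHull ha N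
    obtain ⟨m, hm⟩ := hαβ n
    exact ⟨_, subset_closure ⟨m, fun _ => rfl⟩, dSeq_le_of_eqOn (hn.trans hm)⟩
  · obtain ⟨m, hm⟩ := exists_eqOn_of_mem_sturmianHull hb N
    obtain ⟨n, hn⟩ := hβα m
    exact ⟨_, subset_closure ⟨n, fun _ => rfl⟩, dSeq_le_of_eqOn (hm.trans hn).symm⟩

end Sturmian

theorem sturmianHull_continuous_general
    (α₀ : ℝ) (hirr₀ : Irrational α₀) (h0₀ : 0 < α₀) :
    ∀ ε > (0 : ℝ), ∃ δ > (0 : ℝ), ∀ α : ℝ, Irrational α → 0 < α → α < 1 →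
      |α - α₀| < δ → hausdorffDistSeq (sturmianHull α) (sturmianHull α₀) < ε := by
  intro ε hε
  obtain ⟨N, hN⟩ := exists_nat_gt (1 / ε)
  obtain ⟨δ, hδ, hwindows⟩ := Sturmian.exists_pos_eqOn_sturmian_windows hirr₀ h0₀ N
  refine ⟨δ, hδ, fun α hα hαpos _ hαδ => ?_⟩
  obtain ⟨hαα₀, hα₀α⟩ := hwindows α hα hαpos hαδ
  calc hausdorffDistSeq (sturmianHull α) (sturmianHull α₀) ≤ 1 / (N + 2) :=
        Sturmian.hausdorffDistSeq_sturmianHull_le hαα₀ hα₀α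
    _ < ε := (one_div_lt (by positivity) hε).2 (by linarith)

/-- The Sturmian subshift `X_α` depends continuously on the irrational angle `α` for
the Hausdorff distance. -/
theorem sturmianHull_continuous
    (α₀ : ℝ) (hirr₀ : Irrational α₀) (h0₀ : 0 < α₀) (h1₀ : α₀ < 1) :
    ∀ ε > (0 : ℝ), ∃ δ > (0 : ℝ), ∀ α : ℝ, Irrational α → 0 < α → α < 1 →
      |α - α₀| < δ → hausdorffDistSeq (sturmianHull α) (sturmianHull α₀) < ε :=
  sturmianHull_continuous_general α₀ hirr₀ h0₀
end
end

section
/- For every irrational α ∈ (0,1), the set X_α is nonempty and compact, satisfies σ(X_α) = X_α, the shift restricted to X_α is minimal (for every u ∈ X_α the orbit {σⁿ(u) : n ∈ ℤ} is dense in X_α), X_α contains no σ-periodic point (there is no u ∈ X_α and n ≠ 0 with σⁿ(u) = u), and X_α is a Cantor set (perfect and totally disconnected). -/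
open Set

noncomputable section

/-- The shift on the space `Σ₂ = {0,1}^ℤ` of two-sided binary sequences. -/
def shift2 (u : ℤ → Fin 2) : ℤ → Fin 2 := fun k => u (k + 1)

/-!
Shifting `s_α` by `n` is the same as coding the rotation orbit of `nα` instead of `0`, and this
coding depends right-continuously on the starting point. Dirichlet's approximation theorem gives
multiples `dα` with arbitrarily small positive fractional part; stepping by them shows that the
return times of the rotation to `[0, δ)` are syndetic, so a bounded shift turns any window of any
point of the hull into a window of `s_α`: the hull is minimal. A periodic point would then force
`s_α` itself to be periodic; since `s_α` records whether `fract (kα)` increases by `α` or by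
`α - 1`, periodicity would give `fract (mnα) = m * fract (nα)` for all `m`, which is impossible.
Perfectness: `s_α(· + p + d)` is close to, but by aperiodicity different from, `s_α(· + p)`.
-/

open Filter Function Topology

section ShiftSpace

variable {X : Type*} [TopologicalSpace X]

lemma nhds_basis_eqOn_Icc [DiscreteTopology X] (u : ℤ → X) :
    (𝓝 u).HasBasis (fun _ : ℕ => True) fun N => {v | EqOn v u (Icc (-(N : ℤ)) N)} := by
  refine ⟨fun t => ⟨fun ht => ?_, fun ⟨N, _, hN⟩ => mem_of_superset ?_ hN⟩⟩
  · rw [nhds_pi, Filter.mem_pi] at ht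
    obtain ⟨I, hI, t', ht', hIt⟩ := ht
    obtain ⟨a, ha⟩ := hI.bddAbove
    obtain ⟨b, hb⟩ := hI.bddBelow
    refine ⟨(max a (-b)).toNat, trivial, fun v hv => hIt fun i hi => ?_⟩
    have hiN : i ∈ Icc (-((max a (-b)).toNat : ℤ)) (max a (-b)).toNat := by
      have := ha hi; have := hb hi; constructor <;> omega
    rw [hv hiN]
    exact mem_of_mem_nhds (ht' i)
  · have : {v | EqOn v u (Icc (-(N : ℤ)) N)} = (Icc (-(N : ℤ)) N).pi fun k => {u k} := by
      ext v; simp [EqOn, Set.mem_pi]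
    rw [this]
    exact set_pi_mem_nhds (finite_Icc _ _) fun k _ => by simp

def shiftOrbit (u : ℤ → X) : Set (ℤ → X) := {v | ∃ n : ℤ, ∀ k, v k = u (k + n)}

lemma mapsTo_closure_shiftOrbit (u : ℤ → X) (m : ℤ) :
    MapsTo (fun w k => w (k + m)) (closure (shiftOrbit u)) (closure (shiftOrbit u)) :=
  MapsTo.closure (fun v ⟨n, hn⟩ => ⟨m + n, fun k => (hn _).trans (by rw [add_assoc])⟩)
    (continuous_pi fun _ => continuous_apply _)

lemma closure_shiftOrbit_subset {u v : ℤ → X} (hv : v ∈ closure (shiftOrbit u)) :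
    closure (shiftOrbit v) ⊆ closure (shiftOrbit u) :=
  closure_minimal (fun w ⟨m, hm⟩ => (funext hm : w = _) ▸ mapsTo_closure_shiftOrbit u m hv)
    isClosed_closure

lemma closure_shiftOrbit_subset_periodic [T2Space X] {u : ℤ → X} {n : ℤ} (hu : Periodic u n) :
    closure (shiftOrbit u) ⊆ {v | Periodic v n} := by
  refine closure_minimal (fun v ⟨m, hm⟩ k => by rw [hm, hm, add_right_comm, hu]) ?_
  simp only [Periodic, ofPred_forall]
  exact isClosed_iInter fun k => isClosed_eq (continuous_apply _) (continuous_apply _)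

end ShiftSpace

lemma image_shift2_closure_shiftOrbit (u : ℤ → Fin 2) :
    shift2 '' closure (shiftOrbit u) = closure (shiftOrbit u) :=
  (mapsTo_closure_shiftOrbit u 1).image_subset.antisymm fun v hv =>
    ⟨fun k => v (k + -1), mapsTo_closure_shiftOrbit u (-1) hv, funext fun k => by simp⟩

def rotationCoding (α x : ℝ) : ℤ → Fin 2 := fun k => if Int.fract (x + k * α) < α then 0 else 1

lemma sturmian_add (α : ℝ) (n k : ℤ) : sturmian α (k + n) = rotationCoding α (n * α) k := by
  simp only [sturmian, rotationCoding]
  congr 3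
  push_cast
  ring

lemma rotationCoding_add_fract (α x y : ℝ) :
    rotationCoding α (x + Int.fract y) = rotationCoding α (x + y) := by
  funext k
  simp only [rotationCoding]
  rw [show x + Int.fract y + k * α = x + y + k * α - ⌊y⌋ by rw [← Int.self_sub_floor]; ring,
    Int.fract_sub_intCast]

lemma eventually_fract_add_lt_iff (α y : ℝ) :
    ∀ᶠ ε in 𝓝[≥] 0, (Int.fract (y + ε) < α ↔ Int.fract y < α) := by
  have hα : ∀ᶠ ε in 𝓝[≥] (0 : ℝ), Int.fract y < α → ε < α - Int.fract y := by
    by_cases h : Int.fract y < α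
    · exact nhdsWithin_le_nhds ((eventually_lt_nhds (sub_pos.2 h)).mono fun _ h' _ => h')
    · exact .of_forall fun _ h' => absurd h' h
  have h1 : ∀ᶠ ε in 𝓝[≥] (0 : ℝ), ε < 1 - Int.fract y :=
    nhdsWithin_le_nhds (eventually_lt_nhds (sub_pos.2 (Int.fract_lt_one y)))
  filter_upwards [hα, h1, self_mem_nhdsWithin] with ε hα h1 (h0 : 0 ≤ ε)
  have hfract : Int.fract (y + ε) = Int.fract y + ε :=
    Int.fract_eq_iff.2 ⟨by linarith [Int.fract_nonneg y], by linarith, ⌊y⌋,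
      by rw [← Int.self_sub_floor]; ring⟩
  rw [hfract]
  exact ⟨fun h => by linarith, fun h => by linarith [hα h]⟩

lemma tendsto_rotationCoding_add_nhdsGE (α x : ℝ) :
    Tendsto (fun ε => rotationCoding α (x + ε)) (𝓝[≥] 0) (𝓝 (rotationCoding α x)) := by
  refine tendsto_pi_nhds.2 fun k => ?_
  rw [nhds_discrete, tendsto_pure]
  filter_upwards [eventually_fract_add_lt_iff α (x + k * α)] with ε hε
  simp only [rotationCoding, add_right_comm x ε, hε]

lemma exists_pos_eqOn_rotationCoding_add (α x : ℝ) (N : ℕ) :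
    ∃ δ > 0, ∀ ε ∈ Ico 0 δ,
      EqOn (rotationCoding α (x + ε)) (rotationCoding α x) (Icc (-(N : ℤ)) N) := by
  simpa using ((nhdsGE_basis_Ico 0).tendsto_iff (nhds_basis_eqOn_Icc _)).1
    (tendsto_rotationCoding_add_nhdsGE α x) N trivial

lemma exists_fract_int_mul_mem_Ioo {α : ℝ} (hirr : Irrational α) {δ : ℝ} (hδ : 0 < δ) :
    ∃ d : ℤ, Int.fract (d * α) ∈ Ioo 0 δ := by
  obtain ⟨n, hn⟩ := exists_nat_one_div_lt hδ
  obtain ⟨j, k, hk, -, hjk⟩ := Real.exists_int_int_abs_mul_sub_le α n.succ_pos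
  have hsmall : |k * α - j| < min δ 1 := by
    have hn0 : (0 : ℝ) ≤ n := n.cast_nonneg
    refine hjk.trans_lt (lt_min (lt_of_le_of_lt ?_ hn) ?_)
    · gcongr; linarith
    · rw [div_lt_one (by positivity)]; push_cast; linarith
  have hne : k * α - j ≠ 0 := sub_ne_zero.2 ((hirr.intCast_mul hk.ne').ne_int j)
  rcases hne.lt_or_gt with hneg | hpos
  · rw [abs_of_neg hneg, lt_min_iff] at hsmall
    have hfract : Int.fract (((-k : ℤ) : ℝ) * α) = -(k * α - j) :=
      Int.fract_eq_iff.2 ⟨by linarith, hsmall.2, -j, by push_cast; ring⟩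
    exact ⟨-k, hfract ▸ ⟨by linarith, hsmall.1⟩⟩
  · rw [abs_of_pos hpos, lt_min_iff] at hsmall
    have hfract : Int.fract ((k : ℝ) * α) = k * α - j :=
      Int.fract_eq_iff.2 ⟨hpos.le, hsmall.2, j, by ring⟩
    exact ⟨k, hfract ▸ ⟨hpos, hsmall.1⟩⟩

lemma exists_abs_le_fract_lt {α : ℝ} (hirr : Irrational α) {δ : ℝ} (hδ : 0 < δ) :
    ∃ Q : ℕ, ∀ p : ℤ, ∃ j : ℤ, |j| ≤ Q ∧ Int.fract (((p + j : ℤ) : ℝ) * α) < δ := by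
  obtain ⟨d, hγ0, hγδ⟩ := exists_fract_int_mul_mem_Ioo hirr hδ
  set γ := Int.fract (d * α) with hγ
  have hγ1 : γ < 1 := Int.fract_lt_one _
  refine ⟨⌈1 / γ⌉₊ * d.natAbs, fun p => ?_⟩
  set y := Int.fract (p * α) with hy
  have hy0 : 0 ≤ y := Int.fract_nonneg _
  have hy1 : y < 1 := Int.fract_lt_one _
  -- `J` is the least number of steps of length `γ` that carries `y` to or past `1`.
  set J := ⌈(1 - y) / γ⌉₊
  have hJ : 1 - y ≤ J * γ := (div_le_iff₀ hγ0).1 (Nat.le_ceil _)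
  have hJ' : J * γ < 1 - y + γ := by
    have hceil : (J : ℝ) < (1 - y) / γ + 1 := Nat.ceil_lt_add_one (by positivity)
    calc J * γ < ((1 - y) / γ + 1) * γ := by gcongr
      _ = 1 - y + γ := by field_simp
  have hfract : Int.fract (((p + J * d : ℤ) : ℝ) * α) = y + J * γ - 1 :=
    Int.fract_eq_iff.2 ⟨by linarith, by linarith, ⌊(p : ℝ) * α⌋ + J * ⌊(d : ℝ) * α⌋ + 1,
      by rw [hy, hγ, ← Int.self_sub_floor, ← Int.self_sub_floor]; push_cast; ring⟩
  refine ⟨J * d, ?_, by linarith⟩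
  rw [abs_mul, Nat.abs_cast, Int.abs_eq_natAbs]
  push_cast
  gcongr
  exact Nat.ceil_mono (div_le_div_of_nonneg_right (by linarith) hγ0.le)

lemma fract_succ_mul {α : ℝ} (h0 : 0 ≤ α) (h1 : α < 1) (k : ℤ) :
    Int.fract (((k + 1 : ℤ) : ℝ) * α) =
      Int.fract (k * α) + α - if sturmian α (k + 1) = 0 then 1 else 0 := by
  have hx0 := Int.fract_nonneg ((k : ℝ) * α)
  have hx1 := Int.fract_lt_one ((k : ℝ) * α)
  rcases lt_or_ge (Int.fract (k * α) + α) 1 with h | h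
  · have hfract : Int.fract (((k + 1 : ℤ) : ℝ) * α) = Int.fract (k * α) + α :=
      Int.fract_eq_iff.2 ⟨by linarith, h, ⌊(k : ℝ) * α⌋,
        by rw [← Int.self_sub_floor]; push_cast; ring⟩
    have hs : sturmian α (k + 1) = 1 := if_neg (by rw [hfract]; linarith)
    rw [hfract, hs]
    simp
  · have hfract : Int.fract (((k + 1 : ℤ) : ℝ) * α) = Int.fract (k * α) + α - 1 :=
      Int.fract_eq_iff.2 ⟨by linarith, by linarith, ⌊(k : ℝ) * α⌋ + 1,
        by rw [← Int.self_sub_floor]; push_cast; ring⟩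
    have hs : sturmian α (k + 1) = 0 := if_pos (by rw [hfract]; linarith)
    rw [hfract, hs]
    simp

theorem sturmian_not_periodic {α : ℝ} (hirr : Irrational α) (h0 : 0 ≤ α) (h1 : α < 1) {n : ℤ}
    (hn : n ≠ 0) : ¬ Periodic (sturmian α) n := by
  intro hper
  set e : ℤ → ℝ := fun k => Int.fract (((k + n : ℤ) : ℝ) * α) - Int.fract (k * α)
  have he : Periodic e 1 := fun k => by
    simp only [e]
    rw [show k + 1 + n = k + n + 1 by ring, fract_succ_mul h0 h1, fract_succ_mul h0 h1,
      show k + n + 1 = k + 1 + n by ring, hper]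
    ring
  have hmul : ∀ m : ℕ, Int.fract (((m * n : ℤ) : ℝ) * α) = m * Int.fract (n * α) := by
    intro m
    induction m with
    | zero => simp
    | succ m ih =>
      have hem : e (m * n) = Int.fract (n * α) := by
        simpa [e] using he.int_mul_eq (m * n)
      simp only [e] at hem
      rw [show ((m + 1 : ℕ) : ℤ) * n = m * n + n by push_cast; ring]
      push_cast at ih hem ⊢
      linarith
  have hpos : 0 < Int.fract (n * α) :=
    Int.fract_pos.2 ((hirr.intCast_mul hn).ne_int _)
  obtain ⟨m, hm⟩ := exists_nat_gt (1 / Int.fract (n * α))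
  have := hmul m ▸ Int.fract_lt_one (((m * n : ℤ) : ℝ) * α)
  rw [div_lt_iff₀ hpos] at hm
  linarith

theorem sturmian_mem_closure_shiftOrbit {α : ℝ} (hirr : Irrational α) {u : ℤ → Fin 2}
    (hu : u ∈ sturmianHull α) : sturmian α ∈ closure (shiftOrbit u) := by
  rw [mem_closure_iff_nhds_basis (nhds_basis_eqOn_Icc _)]
  intro N _
  obtain ⟨δ, hδ, hstable⟩ := exists_pos_eqOn_rotationCoding_add α 0 N
  obtain ⟨Q, hQ⟩ := exists_abs_le_fract_lt hirr hδ
  obtain ⟨v, ⟨p, hp⟩, hvu⟩ := (mem_closure_iff_nhds_basis (nhds_basis_eqOn_Icc u)).1 hu (N + Q) trivial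
  obtain ⟨j, hjQ, hjδ⟩ := hQ p
  refine ⟨fun k => u (k + j), ⟨j, fun _ => rfl⟩, fun k hk => ?_⟩
  have hkj : k + j ∈ Icc (-((N + Q : ℕ) : ℤ)) (N + Q : ℕ) := by
    rw [abs_le] at hjQ; push_cast; constructor <;> linarith [hk.1, hk.2]
  have hcoding := hstable _ ⟨Int.fract_nonneg _, hjδ⟩ hk
  rw [rotationCoding_add_fract, zero_add] at hcoding
  calc u (k + j) = sturmian α (k + (p + j)) := by rw [← hvu hkj, hp, add_assoc, add_comm j]
    _ = rotationCoding α 0 k := (sturmian_add α _ k).trans hcoding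
    _ = sturmian α k := by simpa using (sturmian_add α 0 k).symm

theorem sturmianHull_subset_closure_shiftOrbit {α : ℝ} (hirr : Irrational α) {u : ℤ → Fin 2}
    (hu : u ∈ sturmianHull α) : sturmianHull α ⊆ closure (shiftOrbit u) :=
  closure_shiftOrbit_subset (sturmian_mem_closure_shiftOrbit hirr hu)

theorem not_periodic_of_mem_sturmianHull {α : ℝ} (hirr : Irrational α) (h0 : 0 ≤ α) (h1 : α < 1)
    {u : ℤ → Fin 2} (hu : u ∈ sturmianHull α) {n : ℤ} (hn : n ≠ 0) : ¬ Periodic u n :=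
  fun hper => sturmian_not_periodic hirr h0 h1 hn <| closure_shiftOrbit_subset_periodic hper <|
    sturmianHull_subset_closure_shiftOrbit hirr hu <| subset_closure ⟨0, fun k => by simp⟩

theorem preperfect_sturmianHull {α : ℝ} (hirr : Irrational α) (h0 : 0 ≤ α) (h1 : α < 1) :
    Preperfect (sturmianHull α) := by
  rw [preperfect_iff_nhds]
  intro u hu U hU
  obtain ⟨N, -, hNU⟩ := (nhds_basis_eqOn_Icc u).mem_iff.1 hU
  obtain ⟨v, ⟨p, hp⟩, hvu⟩ := (mem_closure_iff_nhds_basis (nhds_basis_eqOn_Icc u)).1 hu N trivial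
  obtain ⟨δ, hδ, hstable⟩ := exists_pos_eqOn_rotationCoding_add α (p * α) N
  obtain ⟨d, hd⟩ := exists_fract_int_mul_mem_Ioo hirr hδ
  have hd0 : d ≠ 0 := by rintro rfl; simp at hd
  have hv : v ∈ sturmianHull α := subset_closure ⟨p, hp⟩
  set w : ℤ → Fin 2 := fun k => v (k + d)
  have hw : w ∈ sturmianHull α := mapsTo_closure_shiftOrbit _ d hv
  have hwv : EqOn w v (Icc (-(N : ℤ)) N) := fun k hk => by
    have hcoding := hstable _ ⟨hd.1.le, hd.2⟩ hk
    rw [rotationCoding_add_fract] at hcoding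
    calc w k = sturmian α (k + (p + d)) := by show v (k + d) = _; rw [hp, add_assoc, add_comm d]
      _ = rotationCoding α (p * α + d * α) k := by rw [sturmian_add, Int.cast_add, add_mul]
      _ = v k := by rw [hcoding, hp, sturmian_add]
  by_cases hvu' : v = u
  · exact ⟨w, ⟨hNU (hwv.trans hvu), hw⟩, fun hwu =>
      not_periodic_of_mem_sturmianHull hirr h0 h1 hv hd0 fun k => congrFun (hwu.trans hvu'.symm) k⟩
  · exact ⟨v, ⟨hNU hvu, hv⟩, hvu'⟩

/-- For irrational `α ∈ (0,1)`, the Sturmian subshift `X_α` is a nonempty, compact,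
shift-invariant, minimal, aperiodic Cantor set. -/
theorem sturmianHull_minimal_aperiodic_cantor
    (α : ℝ) (hirr : Irrational α) (h0 : 0 < α) (h1 : α < 1) :
    (sturmianHull α).Nonempty ∧
    IsCompact (sturmianHull α) ∧
    shift2 '' sturmianHull α = sturmianHull α ∧
    (∀ u ∈ sturmianHull α,
      sturmianHull α ⊆ closure {v | ∃ n : ℤ, ∀ k : ℤ, v k = u (k + n)}) ∧
    (∀ u ∈ sturmianHull α, ∀ n : ℤ, n ≠ 0 → ¬(∀ k : ℤ, u (k + n) = u k)) ∧
    Perfect (sturmianHull α) ∧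
    IsTotallyDisconnected (sturmianHull α) :=
  ⟨⟨sturmian α, subset_closure ⟨0, fun k => by simp⟩⟩,
    isClosed_closure.isCompact,
    image_shift2_closure_shiftOrbit _,
    fun _ hu => sturmianHull_subset_closure_shiftOrbit hirr hu,
    fun _ hu _ hn => not_periodic_of_mem_sturmianHull hirr h0.le h1 hu hn,
    ⟨isClosed_closure, preperfect_sturmianHull hirr h0.le h1⟩,
    isTotallyDisconnected_of_totallyDisconnectedSpace _⟩
end
end

section
/- Let M be a metric space, f : M → M a homeomorphism, and (K, j, h) a weak Denjoy sub-system for f. Assume that f restricted to j(K) is expansive with constant e > 0: for all x, y ∈ j(K), if dist(fⁿ(x), fⁿ(y)) ≤ e for all n ∈ ℤ, then x = y. Then the connected components of 𝕋 \ K fall into finitely many h-orbits: there exist finitely many connected components U₁, …, U_m of 𝕋 \ K such that every connected component of 𝕋 \ K equals hⁿ(U_i) for some n ∈ ℤ and some i ∈ {1, …, m}. -/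
open Filter Topology Set

noncomputable section

/-!
Pulling back along the uniformly continuous conjugacy `j`, expansiveness of `f` on `j(K)`
makes `h` expansive on `K` with some constant `δ > 0`. Each gap is an open arc whose two
endpoints are distinct points of `K`, so some iterate `hⁿ` separates them by more than `δ`; the
image gap `hⁿ(U)` still has both image endpoints in its closure, hence has length, and so
Lebesgue measure, greater than `δ`. Gaps are disjoint, so only finitely many have measure `≥ δ`.
-/

open MeasureTheory Function Equiv Pointwise

section OrderTopology

variable {α : Type*} [ConditionallyCompleteLinearOrder α] [TopologicalSpace α] [OrderTopology α]

theorem IsClosed.exists_Ioo_subset_compl {s : Set α} (hs : IsClosed s) {a b t : α}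
    (ha : a ∈ s) (hb : b ∈ s) (hat : a ≤ t) (htb : t ≤ b) (ht : t ∉ s) :
    ∃ c ∈ s, ∃ d ∈ s, a ≤ c ∧ c < t ∧ t < d ∧ d ≤ b ∧ Ioo c d ⊆ sᶜ := by
  have hbelow : (s ∩ Iic t).Nonempty := ⟨a, ha, hat⟩
  have habove : (s ∩ Ici t).Nonempty := ⟨b, hb, htb⟩
  have hbdd : BddAbove (s ∩ Iic t) := ⟨t, fun _ hu => hu.2⟩
  have hbdd' : BddBelow (s ∩ Ici t) := ⟨t, fun _ hu => hu.2⟩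
  obtain ⟨hcs, hct⟩ := (hs.inter isClosed_Iic).csSup_mem hbelow hbdd
  obtain ⟨hds, htd⟩ := (hs.inter isClosed_Ici).csInf_mem habove hbdd'
  refine ⟨_, hcs, _, hds, le_csSup hbdd ⟨ha, hat⟩, lt_of_le_of_ne hct (ne_of_mem_of_not_mem hcs ht),
    lt_of_le_of_ne htd (ne_of_mem_of_not_mem hds ht).symm, csInf_le hbdd' ⟨hb, htb⟩, ?_⟩
  rintro u ⟨hcu, hud⟩ hu
  rcases le_total u t with hut | htu
  · exact (le_csSup hbdd ⟨hu, hut⟩).not_gt hcu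
  · exact (csInf_le hbdd' ⟨hu, htu⟩).not_gt hud

end OrderTopology

theorem Equiv.Perm.image_zpow_eq {α : Type*} (σ : Perm α) {s : Set α} (hs : σ '' s = s)
    (n : ℤ) : ⇑(σ ^ n) '' s = s := by
  have hσ : σ ∈ MulAction.stabilizer (Perm α) s := hs
  exact (MulAction.stabilizer (Perm α) s).zpow_mem hσ n

theorem Equiv.Perm.zpow_apply_mem_iff {α : Type*} (σ : Perm α) {s : Set α} (hs : σ '' s = s)
    (n : ℤ) (x : α) : (σ ^ n) x ∈ s ↔ x ∈ s := by
  conv_lhs => rw [← σ.image_zpow_eq hs n]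
  exact (σ ^ n).injective.mem_set_image

theorem Function.Semiconj.perm_zpow {α β : Type*} {j : α → β} {σ : Perm α} {τ : Perm β}
    (h : Semiconj j σ τ) : ∀ n : ℤ, Semiconj j ⇑(σ ^ n) ⇑(τ ^ n)
  | (n : ℕ) => by simpa only [zpow_natCast, Perm.coe_pow] using h.iterate_right n
  | .negSucc n => by
    have hn : Semiconj j ⇑(σ ^ (n + 1)) ⇑(τ ^ (n + 1)) := by
      simpa only [Perm.coe_pow] using h.iterate_right (n + 1)
    rw [zpow_negSucc, zpow_negSucc]
    exact hn.inverses_right (fun x => by simp) (fun x => by simp)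

theorem Homeomorph.toEquiv_zpow {X : Type*} [TopologicalSpace X] (g : X ≃ₜ X) (n : ℤ) :
    (g ^ n).toEquiv = g.toEquiv ^ n :=
  map_zpow (⟨⟨Homeomorph.toEquiv, rfl⟩, fun _ _ => rfl⟩ : (X ≃ₜ X) →* Perm X) g n

theorem Homeomorph.image_zpow_connectedComponentIn {X : Type*} [TopologicalSpace X] (g : X ≃ₜ X)
    {s : Set X} (hs : g '' s = s) (n : ℤ) {x : X} (hx : x ∈ s) :
    ⇑(g.toEquiv ^ n) '' connectedComponentIn s x =
      connectedComponentIn s ((g.toEquiv ^ n) x) := by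
  have hsn := Perm.image_zpow_eq g.toEquiv hs n
  rw [← g.toEquiv_zpow] at hsn ⊢
  conv_rhs => rw [← hsn]
  exact (g ^ n).image_connectedComponentIn hx

theorem IsOpenMap.locallyConnectedSpace {X Y : Type*} [TopologicalSpace X] [TopologicalSpace Y]
    [LocallyConnectedSpace X] {f : X → Y} (hf : IsOpenMap f) (hc : Continuous f)
    (hs : Surjective f) : LocallyConnectedSpace Y := by
  refine locallyConnectedSpace_iff_subsets_isOpen_isConnected.2 fun y U hU => ?_
  obtain ⟨x, rfl⟩ := hs y
  obtain ⟨V, hVU, hV, hxV, hVc⟩ := locallyConnectedSpace_iff_subsets_isOpen_isConnected.1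
    ‹_› x _ (hc.continuousAt.preimage_mem_nhds hU)
  exact ⟨f '' V, image_subset_iff.2 hVU, hf V hV, mem_image_of_mem f hxV,
    hVc.image f hc.continuousOn⟩

theorem IsOpen.finite_connectedComponentIn_const_le_measure {X : Type*} [TopologicalSpace X]
    [LocallyConnectedSpace X] [MeasurableSpace X] [OpensMeasurableSpace X] (μ : Measure X)
    [IsFiniteMeasure μ] {U : Set X} (hU : IsOpen U) {ε : ENNReal} (hε : 0 < ε) :
    {C | (∃ x ∈ U, C = connectedComponentIn U x) ∧ ε ≤ μ C}.Finite := by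
  set S := {C | ∃ x ∈ U, C = connectedComponentIn U x}
  have hdisj : Pairwise (Disjoint on fun C : S => (C : Set X)) := by
    intro C D hne
    obtain ⟨x, -, hC⟩ := C.2
    obtain ⟨y, -, hD⟩ := D.2
    refine Set.disjoint_left.2 fun z (hzC : z ∈ (C : Set X)) (hzD : z ∈ (D : Set X)) =>
      hne (Subtype.ext ?_)
    rw [hC] at hzC
    rw [hD] at hzD
    rw [hC, hD, connectedComponentIn_eq hzC, connectedComponentIn_eq hzD]
  have hmeas : ∀ C : S, MeasurableSet (C : Set X) := by
    rintro ⟨_, x, -, rfl⟩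
    exact hU.connectedComponentIn.measurableSet
  refine ((Measure.finite_const_le_meas_of_disjoint_iUnion μ hε hmeas hdisj
    (measure_ne_top _ _)).image Subtype.val).subset ?_
  rintro C ⟨hC, hεC⟩
  exact ⟨⟨C, hC⟩, hεC, rfl⟩

namespace UnitAddCircle

def openArc (c d : ℝ) : Set UnitAddCircle := ((↑) : ℝ → UnitAddCircle) '' Ioo c d

theorem continuous_coe : Continuous ((↑) : ℝ → UnitAddCircle) := continuous_quotient_mk'

instance : LocallyConnectedSpace UnitAddCircle :=
  QuotientAddGroup.isOpenMap_coe.locallyConnectedSpace continuous_coe QuotientAddGroup.mk_surjective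

theorem isOpen_openArc (c d : ℝ) : IsOpen (openArc c d) :=
  QuotientAddGroup.isOpenMap_coe _ isOpen_Ioo

theorem isPreconnected_openArc (c d : ℝ) : IsPreconnected (openArc c d) :=
  isPreconnected_Ioo.image _ continuous_coe.continuousOn

theorem coe_ne_coe_of_lt_of_lt {c d : ℝ} (hcd : c < d) (hdc : d < c + 1) :
    (c : UnitAddCircle) ≠ d := by
  rw [Ne, AddCircle.coe_eq_coe_iff_of_mem_Ico ⟨le_rfl, by linarith⟩ ⟨hcd.le, hdc⟩]
  exact hcd.ne

theorem dist_coe_le (a b : ℝ) : dist (a : UnitAddCircle) b ≤ |a - b| := by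
  rw [dist_eq_norm, ← AddCircle.coe_sub]
  exact QuotientAddGroup.norm_mk_le_norm

theorem coe_left_mem_closure_openArc {c d : ℝ} (h : c < d) :
    (c : UnitAddCircle) ∈ closure (openArc c d) :=
  image_closure_subset_closure_image continuous_coe
    ⟨c, by simp [closure_Ioo h.ne, h.le], rfl⟩

theorem coe_right_mem_closure_openArc {c d : ℝ} (h : c < d) :
    (d : UnitAddCircle) ∈ closure (openArc c d) :=
  image_closure_subset_closure_image continuous_coe
    ⟨d, by simp [closure_Ioo h.ne, h.le], rfl⟩

theorem dist_le_of_mem_closure_openArc {c d : ℝ} {x y : UnitAddCircle}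
    (hx : x ∈ closure (openArc c d)) (hy : y ∈ closure (openArc c d)) : dist x y ≤ d - c := by
  have hcl : closure (openArc c d) ⊆ (↑) '' Icc c d :=
    closure_minimal (image_mono Ioo_subset_Icc_self)
      (isCompact_Icc.image continuous_coe).isClosed
  obtain ⟨a, ha, rfl⟩ := hcl hx
  obtain ⟨b, hb, rfl⟩ := hcl hy
  refine (dist_coe_le a b).trans (abs_sub_le_iff.2 ⟨?_, ?_⟩) <;> linarith [ha.1, ha.2, hb.1, hb.2]

theorem ofReal_le_volume_openArc {c d : ℝ} (h : d ≤ c + 1) :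
    ENNReal.ofReal (d - c) ≤ volume (openArc c d) := by
  rw [← (AddCircle.measurePreserving_mk 1 c).measure_preimage
    (isOpen_openArc c d).measurableSet.nullMeasurableSet,
    Measure.restrict_apply' measurableSet_Ioc, ← Real.volume_Ioo]
  exact measure_mono fun u hu => ⟨mem_image_of_mem _ hu, hu.1, hu.2.le.trans h⟩

theorem disjoint_openArc {c d : ℝ} (h : d ≤ c + 1) :
    Disjoint (openArc c d) (openArc d (c + 1)) := by
  refine Set.disjoint_left.2 ?_
  rintro _ ⟨u, hu, rfl⟩ ⟨v, hv, hvu⟩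
  have hc : c < v := hu.1.trans (hu.2.trans hv.1)
  rw [AddCircle.coe_eq_coe_iff_of_mem_Ico ⟨hc.le, hv.2⟩ ⟨hu.1.le, hu.2.trans_le h⟩] at hvu
  exact (hu.2.trans hv.1).ne' hvu

theorem compl_pair_subset_openArc_union (c d : ℝ) :
    {(c : UnitAddCircle), (d : UnitAddCircle)}ᶜ ⊆ openArc c d ∪ openArc d (c + 1) := by
  intro x hx
  set t : ℝ := (AddCircle.equivIco 1 c x : ℝ)
  have ht : t ∈ Ico c (c + 1) := (AddCircle.equivIco 1 c x).2
  have htx : (t : UnitAddCircle) = x := AddCircle.coe_equivIco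
  have htc : c < t := lt_of_le_of_ne ht.1 fun h => hx (by simp [← htx, ← h])
  rcases lt_or_gt_of_ne fun h : t = d => hx (by simp [← htx, h]) with htd | hdt
  · exact Or.inl ⟨t, ⟨htc, htd⟩, htx⟩
  · exact Or.inr ⟨t, ⟨hdt, ht.2⟩, htx⟩

theorem exists_connectedComponentIn_compl_eq_openArc {K : Set UnitAddCircle} (hK : IsClosed K)
    (hK2 : K.Nontrivial) {x : UnitAddCircle} (hx : x ∉ K) :
    ∃ c d : ℝ, c < d ∧ d < c + 1 ∧ (c : UnitAddCircle) ∈ K ∧ (d : UnitAddCircle) ∈ K ∧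
      connectedComponentIn Kᶜ x = openArc c d := by
  obtain ⟨t, rfl⟩ := QuotientAddGroup.mk_surjective x
  obtain ⟨y, hy⟩ := hK2.nonempty
  set a : ℝ := (AddCircle.equivIoc 1 (t - 1) y : ℝ)
  have ha : a ∈ Ioc (t - 1) (t - 1 + 1) := (AddCircle.equivIoc 1 (t - 1) y).2
  have haK : (a : UnitAddCircle) ∈ K := by rwa [AddCircle.coe_equivIoc]
  have ha1K : ((a + 1 : ℝ) : UnitAddCircle) ∈ K := by rwa [AddCircle.coe_add_period]
  obtain ⟨c, hcK, d, hdK, hac, hct, htd, hda, hcd⟩ :=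
    (hK.preimage continuous_coe).exists_Ioo_subset_compl haK ha1K
      (by linarith [ha.2]) (by linarith [ha.1]) hx
  have hsub : openArc c d ⊆ Kᶜ := image_subset_iff.2 hcd
  have ht : ((t : ℝ) : UnitAddCircle) ∈ openArc c d := ⟨t, ⟨hct, htd⟩, rfl⟩
  have hdc : d ≤ c + 1 := by linarith
  have hcover : Kᶜ ⊆ openArc c d ∪ openArc d (c + 1) := fun z hz =>
    compl_pair_subset_openArc_union c d (by rintro (rfl | rfl) <;> contradiction)
  have hcomp : connectedComponentIn Kᶜ t = openArc c d :=
    (isPreconnected_connectedComponentIn.subset_left_of_subset_union (isOpen_openArc c d)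
      (isOpen_openArc d (c + 1)) (disjoint_openArc hdc)
      ((connectedComponentIn_subset _ _).trans hcover)
      ⟨t, mem_connectedComponentIn hx, ht⟩).antisymm
      ((isPreconnected_openArc c d).subset_connectedComponentIn ht hsub)
  refine ⟨c, d, hct.trans htd, lt_of_le_of_ne hdc fun hd => ?_, hcK, hdK, hcomp⟩
  -- if the arc were the whole circle minus `c`, then `K` would be the single point `c`
  obtain ⟨z, hzK, hzc⟩ := hK2.exists_ne (c : UnitAddCircle)
  have hzd : z ≠ d := by rwa [hd, AddCircle.coe_add_period]
  have hz : z ∈ ({(c : UnitAddCircle), (d : UnitAddCircle)} : Set UnitAddCircle)ᶜ := by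
    simp [hzc, hzd]
  rcases compl_pair_subset_openArc_union c d hz with hz | ⟨_, hz, -⟩
  · exact hsub hz hzK
  · rw [hd, Ioo_self] at hz
    exact hz

end UnitAddCircle

def ExpansiveOn {M : Type*} [PseudoMetricSpace M] (f : Perm M) (s : Set M) (e : ℝ) : Prop :=
  ∀ x ∈ s, ∀ y ∈ s, (∀ n : ℤ, dist ((f ^ n) x) ((f ^ n) y) ≤ e) → x = y

theorem ExpansiveOn.exists_lt_dist {M : Type*} [PseudoMetricSpace M] {f : Perm M} {s : Set M}
    {e : ℝ} (h : ExpansiveOn f s e) {x y : M} (hx : x ∈ s) (hy : y ∈ s) (hxy : x ≠ y) :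
    ∃ n : ℤ, e < dist ((f ^ n) x) ((f ^ n) y) := by
  by_contra! H
  exact hxy (h x hx y hy H)

theorem ExpansiveOn.exists_of_semiconj {X M : Type*} [PseudoMetricSpace X] [PseudoMetricSpace M]
    {σ : Perm X} {τ : Perm M} {j : X → M} {e : ℝ} (hτ : ExpansiveOn τ (range j) e) (he : 0 < e)
    (hj : UniformContinuous j) (hinj : Injective j) (hσ : Semiconj j σ τ) :
    ∃ δ > 0, ExpansiveOn σ univ δ := by
  obtain ⟨δ, hδ, hjδ⟩ := Metric.uniformContinuous_iff.1 hj e he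
  refine ⟨δ / 2, half_pos hδ, fun x _ y _ hxy => hinj (hτ _ ⟨x, rfl⟩ _ ⟨y, rfl⟩ fun n => ?_)⟩
  rw [← hσ.perm_zpow n x, ← hσ.perm_zpow n y]
  exact (hjδ ((hxy n).trans_lt (half_lt_self hδ))).le

theorem UnitAddCircle.exists_zpow_ofReal_lt_volume_connectedComponentIn
    {g : UnitAddCircle ≃ₜ UnitAddCircle} {K : Set UnitAddCircle} (hK : IsClosed K)
    (hK2 : K.Nontrivial) (hgK : g '' K = K) {δ : ℝ} (hexp : ExpansiveOn g.toEquiv K δ)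
    {x : UnitAddCircle} (hx : x ∉ K) :
    ∃ n : ℤ, ENNReal.ofReal δ < volume (connectedComponentIn Kᶜ ((g.toEquiv ^ n) x)) := by
  obtain ⟨c, d, hcd, hdc, hcK, hdK, hC⟩ := exists_connectedComponentIn_compl_eq_openArc hK hK2 hx
  obtain ⟨n, hn⟩ := hexp.exists_lt_dist hcK hdK (coe_ne_coe_of_lt_of_lt hcd hdc)
  have hgKc : g '' Kᶜ = Kᶜ := by rw [image_compl_eq g.bijective, hgK]
  have hxn : (g.toEquiv ^ n) x ∉ K := (Perm.zpow_apply_mem_iff g.toEquiv hgK n x).not.2 hx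
  obtain ⟨c', d', hcd', hdc', -, -, hC'⟩ := exists_connectedComponentIn_compl_eq_openArc hK hK2 hxn
  have hcont : Continuous (g.toEquiv ^ n) := by
    rw [← g.toEquiv_zpow]
    exact (g ^ n).continuous
  have hclosure : ∀ z ∈ closure (openArc c d), (g.toEquiv ^ n) z ∈ closure (openArc c' d') := by
    intro z hz
    rw [← hC', ← g.image_zpow_connectedComponentIn hgKc n hx, hC]
    exact image_closure_subset_closure_image hcont (mem_image_of_mem _ hz)
  have hdist := dist_le_of_mem_closure_openArc (hclosure _ (coe_left_mem_closure_openArc hcd))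
    (hclosure _ (coe_right_mem_closure_openArc hcd))
  refine ⟨n, ?_⟩
  calc ENNReal.ofReal δ < ENNReal.ofReal (d' - c') :=
        (ENNReal.ofReal_lt_ofReal_iff (by linarith)).2 (hn.trans_le hdist)
    _ ≤ volume (connectedComponentIn Kᶜ ((g.toEquiv ^ n) x)) :=
        hC' ▸ ofReal_le_volume_openArc hdc'.le

theorem DenjoySystem.nontrivial_K (D : DenjoySystem) : D.K.Nontrivial := by
  obtain ⟨C₀, C₁, ⟨-, ⟨x, hx⟩, h₀⟩, ⟨-, ⟨y, hy⟩, h₁⟩, hdisj⟩ := D.K_perf.splitting D.K_ne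
  exact ⟨x, h₀ hx, y, h₁ hy, hdisj.ne_of_mem hx hy⟩

theorem WDS.exists_expansiveOn_K {M : Type*} [MetricSpace M] {f : Perm M} (W : WDS M f) {e : ℝ}
    (he : 0 < e) (hexp : ExpansiveOn f (range W.j) e) :
    ∃ δ > 0, ExpansiveOn W.h.toEquiv W.K δ := by
  have : CompactSpace W.K := isCompact_iff_compactSpace.1 W.K_cpt
  set σ : Perm W.K := Perm.subtypePerm W.h.toEquiv fun x => by
    simpa using Perm.zpow_apply_mem_iff W.h.toEquiv W.K_inv 1 x
  have hσ : Semiconj W.j σ f := fun x => W.equivar x (σ x) rfl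
  obtain ⟨δ, hδ, hexpσ⟩ := hexp.exists_of_semiconj he
    (CompactSpace.uniformContinuous_of_continuous W.j_emb.continuous) W.j_emb.injective hσ
  refine ⟨δ, hδ, fun x hx y hy hxy =>
    congrArg Subtype.val (hexpσ ⟨x, hx⟩ trivial ⟨y, hy⟩ trivial fun n => ?_)⟩
  simpa [σ, Subtype.dist_eq] using hxy n

/-- If the dynamics of a weak Denjoy sub-system is expansive on the image of the
embedding, then the connected components of the complement of the minimal set fall into
finitely many orbits under the circle homeomorphism. -/
theorem expansive_WDS_finitely_many_gaps
    {M : Type*} [MetricSpace M] (f : M ≃ₜ M) (W : WDS M ⇑f)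
    (e : ℝ) (he : 0 < e)
    (hexp : ∀ x ∈ Set.range W.j, ∀ y ∈ Set.range W.j,
      (∀ n : ℤ, dist ((f.toEquiv ^ n) x) ((f.toEquiv ^ n) y) ≤ e) → x = y) :
    ∃ (m : ℕ) (U : Fin m → Set UnitAddCircle),
      (∀ i : Fin m, ∃ x ∈ W.Kᶜ, U i = connectedComponentIn W.Kᶜ x) ∧
      ∀ x ∈ W.Kᶜ, ∃ (n : ℤ) (i : Fin m),
        connectedComponentIn W.Kᶜ x = (fun y => (W.h.toEquiv ^ n) y) '' U i := by
  obtain ⟨δ, hδ, hexpK⟩ := W.exists_expansiveOn_K (f := f.toEquiv) he hexp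
  obtain ⟨m, U, hU⟩ := (W.K_cpt.isClosed.isOpen_compl.finite_connectedComponentIn_const_le_measure
    volume (ENNReal.ofReal_pos.2 hδ)).fin_embedding
  have hUi : ∀ i, U i ∈ range U := mem_range_self
  rw [hU] at hUi
  refine ⟨m, U, fun i => (hUi i).1, fun x hx => ?_⟩
  obtain ⟨n, hn⟩ := UnitAddCircle.exists_zpow_ofReal_lt_volume_connectedComponentIn
    W.K_cpt.isClosed W.nontrivial_K W.K_inv hexpK hx
  have hKc : W.h '' W.Kᶜ = W.Kᶜ := by rw [image_compl_eq W.h.bijective, W.K_inv]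
  have hxn : (W.h.toEquiv ^ n) x ∈ W.Kᶜ := (Perm.zpow_apply_mem_iff W.h.toEquiv hKc n x).2 hx
  obtain ⟨i, hi⟩ : connectedComponentIn W.Kᶜ ((W.h.toEquiv ^ n) x) ∈ range U :=
    hU ▸ ⟨⟨_, hxn, rfl⟩, hn.le⟩
  refine ⟨-n, i, ?_⟩
  rw [hi, W.h.image_zpow_connectedComponentIn hKc (-n) hxn, zpow_neg, Perm.coe_inv,
    symm_apply_apply]
end
end

section
/- Let a₁, a₂ ∈ 𝕋 = ℝ/ℤ with a₂ irrational (i.e. a₂ is not the class of a rational number). If there exists a homeomorphism g : 𝕋 → 𝕋 such that g(x + a₂) = g(x) + a₁ for all x ∈ 𝕋, then a₁ = a₂ or a₁ = −a₂. -/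
/-!
Normalise `g` to `h x = g x - g 0`, so that `h (x + a₂) = h x + a₁` and `h 0 = 0`. Since the
multiples of the irrational `a₂` are dense, this forces `h` to be additive. Lifting through the
covering `ℝ → 𝕋` shows that every continuous additive endomorphism of `𝕋` is `x ↦ m • x` for an
integer `m`, and injectivity of `h` forces `m = ±1`. Hence `a₁ = h a₂ = ± a₂`.
-/

open Function

section

variable {G H : Type*} [AddGroup G] [AddGroup H] {f : G → H} {a : G} {b : H}

theorem map_add_zsmul_of_map_add (hf : ∀ x, f (x + a) = f x + b) (n : ℤ) (x : G) :
    f (x + n • a) = f x + n • b := by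
  induction n using Int.induction_on generalizing x with
  | zero => simp
  | succ n ih => rw [add_zsmul, one_zsmul, ← add_assoc, hf, ih, add_zsmul, one_zsmul, add_assoc]
  | pred n ih =>
    have key := hf (x + (-(n : ℤ) - 1) • a)
    rw [add_assoc, ← add_one_zsmul, sub_add_cancel, ih] at key
    rw [eq_sub_of_add_eq key.symm, sub_zsmul, one_zsmul, add_sub_assoc, sub_eq_add_neg]

theorem map_add_of_denseRange_zsmul [TopologicalSpace G] [ContinuousAdd G] [TopologicalSpace H]
    [ContinuousAdd H] [T2Space H] (hf : Continuous f) (ha : DenseRange (· • a : ℤ → G))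
    (hfa : ∀ x, f (x + a) = f x + b) (hf0 : f 0 = 0) (x y : G) : f (x + y) = f x + f y := by
  have hmul (n : ℤ) : f (n • a) = n • b := by
    simpa [hf0] using map_add_zsmul_of_map_add hfa n 0
  refine congr_fun (ha.equalizer (g := fun y ↦ f (x + y)) (h := fun y ↦ f x + f y) (by fun_prop)
    (by fun_prop) (funext fun n ↦ ?_)) y
  simp [map_add_zsmul_of_map_add hfa, hmul]

end

namespace AddCircle

variable {p : ℝ}

theorem exists_coe_mul_of_continuous (φ : ℝ →+ AddCircle p) (hφ : Continuous φ) :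
    ∃ c : ℝ, ∀ x, φ x = ((c * x : ℝ) : AddCircle p) := by
  obtain ⟨F, ⟨hF0, hFφ⟩, -⟩ := (isCoveringMap_coe p).existsUnique_continuousMap_lifts
    ⟨φ, hφ⟩ 0 0 (by simp)
  have hFφ' (x : ℝ) : ((F x : ℝ) : AddCircle p) = φ x := congr_fun hFφ x
  have hFadd (x y : ℝ) : F (x + y) = F x + F y := by
    refine congr_fun ((isCoveringMap_coe p).eq_of_comp_eq (g₁ := fun x ↦ F (x + y))
      (g₂ := fun x ↦ F x + F y) (by fun_prop) (by fun_prop) (funext fun x ↦ ?_) 0 (by simp [hF0])) x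
    simp [hFφ', map_add]
  refine ⟨F 1, fun x ↦ ?_⟩
  have := map_real_smul (AddMonoidHom.mk' F hFadd) F.continuous x 1
  simp only [AddMonoidHom.mk'_apply, smul_eq_mul, mul_one] at this
  rw [← hFφ', this, mul_comm]

theorem exists_eq_zsmul_of_continuous (hp : p ≠ 0) (φ : AddCircle p →+ AddCircle p)
    (hφ : Continuous φ) : ∃ m : ℤ, ∀ x, φ x = m • x := by
  obtain ⟨c, hc⟩ := exists_coe_mul_of_continuous (φ.comp (QuotientAddGroup.mk' _))
    (hφ.comp continuous_quotient_mk')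
  obtain ⟨m, hm⟩ : ∃ m : ℤ, m • p = c * p := by
    rw [← coe_eq_zero_iff, ← hc p]
    simp [coe_period]
  refine ⟨m, fun x ↦ ?_⟩
  induction x using QuotientAddGroup.induction_on with | H x => ?_
  have hmc : (m : ℝ) = c := by
    rw [zsmul_eq_mul] at hm
    exact mul_right_cancel₀ hp hm
  rw [← coe_zsmul, zsmul_eq_mul, hmc]
  exact hc x

theorem eq_one_or_eq_neg_one_of_injective_zsmul [Fact (0 < p)] {m : ℤ}
    (hm : Injective fun x : AddCircle p ↦ m • x) : m = 1 ∨ m = -1 := by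
  by_contra hm1
  -- `m • ·` kills the point `p / n` of order `n ≠ 1`
  set n : ℕ := if m = 0 then 2 else m.natAbs with hn
  have hn_pos : 0 < n := by
    rw [hn]; split_ifs with h0 <;> omega
  have hn_ne_one : n ≠ 1 := by
    rw [hn]; split_ifs with h0 <;> omega
  have hn_dvd : (n : ℤ) ∣ m := by
    rw [hn]; split_ifs with h0
    · simp [h0]
    · exact Int.natAbs_dvd.mpr dvd_rfl
  have hx : ((p / n : ℝ) : AddCircle p) = 0 := by
    apply hm
    simp only [smul_zero]
    rw [← addOrderOf_dvd_iff_zsmul_eq_zero, addOrderOf_period_div hn_pos]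
    exact hn_dvd
  have := addOrderOf_period_div (p := p) hn_pos
  rw [hx, addOrderOf_zero] at this
  exact hn_ne_one this.symm

end AddCircle

/-- If a homeomorphism of the circle conjugates the rotation by an irrational `a₂` to
the rotation by `a₁`, then `a₁ = a₂` or `a₁ = -a₂`. -/
theorem conjugate_rotations_eq_or_neg
    (a₁ a₂ : UnitAddCircle) (hirr : ∀ q : ℚ, a₂ ≠ ((q : ℝ) : UnitAddCircle))
    (g : UnitAddCircle ≃ₜ UnitAddCircle)
    (hg : ∀ x : UnitAddCircle, g (x + a₂) = g x + a₁) :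
    a₁ = a₂ ∨ a₁ = -a₂ := by
  have hdense : DenseRange (· • a₂ : ℤ → UnitAddCircle) := by
    obtain ⟨α, rfl⟩ := QuotientAddGroup.mk_surjective a₂
    refine AddCircle.denseRange_zsmul_coe_iff.mpr ?_
    rintro ⟨q, hq⟩
    exact hirr q (by rw [hq, div_one])
  set h : UnitAddCircle → UnitAddCircle := fun x ↦ g x - g 0
  have h_add : ∀ x y, h (x + y) = h x + h y :=
    map_add_of_denseRange_zsmul (by fun_prop) hdense
      (fun x ↦ by simp only [h, hg]; abel) (sub_self _)
  obtain ⟨m, hm⟩ := AddCircle.exists_eq_zsmul_of_continuous one_ne_zero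
    (AddMonoidHom.mk' h h_add) (g.continuous.sub continuous_const)
  have hm_inj : Injective fun x : UnitAddCircle ↦ m • x := by
    convert! (sub_left_injective (b := g 0)).comp g.injective using 1
    exact funext fun x ↦ (hm x).symm
  have ha₁ : a₁ = m • a₂ :=
    calc a₁ = g (0 + a₂) - g 0 := by rw [hg, add_sub_cancel_left]
      _ = m • a₂ := by rw [zero_add]; exact hm a₂
  rcases AddCircle.eq_one_or_eq_neg_one_of_injective_zsmul hm_inj with rfl | rfl <;> simp [ha₁]
end
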